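/- arXiv:0901.1389 — 2 statements merged into one kernel-verified Lean document; each statement's English description precedes it below -/
import Mathlib

section
/- Let Γ be a finite connected graph and let e, e′ be two distinct non-separating edges. Then e and e′ belong to the same C1-set of Γ if and only if Γ∖{e,e′} is disconnected (i.e. (e,e′) is a separating pair of edges). -/
/-! Basic theory of finite multigraphs (loops and multiple edges allowed),
following Caporaso–Viviani, "Torelli theorem for graphs and tropical curves". -/

noncomputable section

open scoped Classical

/-- A finite multigraph: finite types of vertices and edges, each edge having two
(possibly equal) endpoints `fst e` and `snd e`. -/
structure Multigraph where
  V : Type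
  E : Type
  [fintV : Fintype V]
  [fintE : Fintype E]
  fst : E → V
  snd : E → V

namespace Multigraph

attribute [instance] Multigraph.fintV Multigraph.fintE

variable (G : Multigraph)

/-- Two vertices are adjacent if some edge joins them. -/
def Adj (v w : G.V) : Prop :=
  ∃ e : G.E, (G.fst e = v ∧ G.snd e = w) ∨ (G.fst e = w ∧ G.snd e = v)

/-- Reachability by walks. -/
def Reachable (v w : G.V) : Prop := Relation.ReflTransGen G.Adj v w

def Preconnected : Prop := ∀ v w : G.V, G.Reachable v w

def Connected : Prop := Nonempty G.V ∧ G.Preconnected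

/-- The number of connected components. -/
def numComponents : ℕ := Nat.card (Quot G.Adj)

/-- The first Betti number `b₁ = c - #V + #E`. -/
def b1 : ℤ := (G.numComponents : ℤ) + (Nat.card G.E : ℤ) - (Nat.card G.V : ℤ)

/-- The spanning subgraph `Γ∖S` obtained by deleting the edges in `S`. -/
def deleteEdges (S : Set G.E) : Multigraph :=
  { V := G.V
    E := {e : G.E // e ∉ S}
    fst := fun e => G.fst e.1
    snd := fun e => G.snd e.1
    fintV := G.fintV
    fintE := Fintype.ofFinite _ }

/-- The subgraph spanned by a set of edges: its vertices are the incident vertices. -/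
def restrict (S : Set G.E) : Multigraph :=
  { V := {v : G.V // ∃ e ∈ S, G.fst e = v ∨ G.snd e = v}
    E := ↥S
    fst := fun e => ⟨G.fst e.1, e.1, e.2, Or.inl rfl⟩
    snd := fun e => ⟨G.snd e.1, e.1, e.2, Or.inr rfl⟩
    fintV := Fintype.ofFinite _
    fintE := Fintype.ofFinite _ }

/-- The graph `Γ(S)` obtained by contracting all the edges *not* in `S`; its vertices
are the connected components of `Γ∖S` and its edges are the elements of `S`. -/
def contractCompl (S : Set G.E) : Multigraph :=
  { V := Quot (G.deleteEdges S).Adj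
    E := ↥S
    fst := fun e => Quot.mk _ (G.fst e.1)
    snd := fun e => Quot.mk _ (G.snd e.1)
    fintV := Fintype.ofFinite _
    fintE := Fintype.ofFinite _ }

/-- An edge is separating if its endpoints are no longer joined after deleting it. -/
def IsSeparating (e : G.E) : Prop :=
  ¬ (G.deleteEdges {e}).Reachable (G.fst e) (G.snd e)

/-- The set of separating edges. -/
def sepEdges : Set G.E := {e | G.IsSeparating e}

/-- The graph with its isolated vertices removed. -/
def core : Multigraph := G.restrict Set.univ

/-- A cycle: a connected graph, free from separating edges, with `b₁ = 1`. -/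
def IsCycleGraph : Prop := G.Connected ∧ G.sepEdges = ∅ ∧ G.b1 = 1

/-- `S` is (the edge set of) a cycle subgraph of `G`. -/
def IsCycleSet (S : Set G.E) : Prop := (G.restrict S).IsCycleGraph

/-- `S` is a C1-set of `G`: writing `Γ̃ = Γ∖E(Γ)_sep`, the set `S` consists of
non-separating edges, the contraction `Γ̃(S)` (with isolated vertices removed) is a
cycle, and `Γ̃∖S` has no separating edges.  (Equivalently, `S` is a C1-set of the
connected component of `Γ̃` containing it.) -/
def IsC1 (S : Set G.E) : Prop :=
  (∀ e ∈ S, ¬ G.IsSeparating e) ∧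
  (((G.deleteEdges G.sepEdges).contractCompl {e | e.1 ∈ S}).core).IsCycleGraph ∧
  ((G.deleteEdges G.sepEdges).deleteEdges {e | e.1 ∈ S}).sepEdges = ∅

/-! ### Orientations -/

/-- An orientation is encoded by a map `E → Bool`; `src` is the source of an edge. -/
def src (o : G.E → Bool) (e : G.E) : G.V := if o e then G.fst e else G.snd e

/-- The target of an edge under the orientation `o`. -/
def tgt (o : G.E → Bool) (e : G.E) : G.V := if o e then G.snd e else G.fst e

/-- An orientation is totally cyclic if there is no nonempty set of vertices `W`,
whose complement meets the component of a vertex of `W`, such that all edges between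
`W` and its complement go in the same direction. -/
def IsTotallyCyclic (o : G.E → Bool) : Prop :=
  ∀ W : Set G.V, W.Nonempty →
    (∃ v ∈ W, ∃ w, w ∉ W ∧ G.Reachable v w) →
    (∃ e, G.src o e ∈ W ∧ G.tgt o e ∉ W) ∧ (∃ e, G.tgt o e ∈ W ∧ G.src o e ∉ W)

/-- Directed reachability with respect to an orientation. -/
def DReachable (o : G.E → Bool) (v w : G.V) : Prop :=
  Relation.ReflTransGen (fun a b => ∃ e, G.src o e = a ∧ G.tgt o e = b) v w

/-! ### Homology -/

/-- Incidence of an oriented edge on a vertex: `(tgt e = v) - (src e = v)`. -/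
def inc (o : G.E → Bool) (e : G.E) (v : G.V) : ℤ :=
  (if G.tgt o e = v then 1 else 0) - (if G.src o e = v then 1 else 0)

/-- `H₁(Γ,ℤ)`: the kernel of the boundary map `C₁(Γ,ℤ) → C₀(Γ,ℤ)`. -/
def cycleSpace (o : G.E → Bool) : Submodule ℤ (G.E → ℤ) where
  carrier := {f | ∀ v, ∑ e, f e * G.inc o e v = 0}
  zero_mem' := by intro v; simp
  add_mem' := by
    intro f g hf hg v
    simp only [Set.mem_setOf_eq] at hf hg
    simp [add_mul, Finset.sum_add_distrib, hf v, hg v]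
  smul_mem' := by
    intro c f hf v
    simp only [Set.mem_setOf_eq] at hf
    simp [smul_eq_mul, mul_assoc, ← Finset.mul_sum, hf v]

/-- Real incidence. -/
def incR (o : G.E → Bool) (e : G.E) (v : G.V) : ℝ := (G.inc o e v : ℝ)

/-- `H₁(Γ,ℝ)`: the kernel of the boundary map `C₁(Γ,ℝ) → C₀(Γ,ℝ)`. -/
def cycleSpaceR (o : G.E → Bool) : Submodule ℝ (G.E → ℝ) where
  carrier := {f | ∀ v, ∑ e, f e * G.incR o e v = 0}
  zero_mem' := by intro v; simp
  add_mem' := by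
    intro f g hf hg v
    simp only [Set.mem_setOf_eq] at hf hg
    simp [add_mul, Finset.sum_add_distrib, hf v, hg v]
  smul_mem' := by
    intro c f hf v
    simp only [Set.mem_setOf_eq] at hf
    simp [smul_eq_mul, mul_assoc, ← Finset.mul_sum, hf v]

/-- The indicator chain of a set of edges. -/
def indicator (S : Set G.E) : G.E → ℤ := fun e => if e ∈ S then 1 else 0

/-- `S` is a cyclically oriented cycle of `G` for the orientation `o`: `S` is a cycle
and its indicator chain is a homology class (each vertex of the cycle has one ingoing
and one outgoing edge of `S`). -/
def IsCyclicallyOriented (o : G.E → Bool) (S : Set G.E) : Prop :=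
  G.IsCycleSet S ∧ G.indicator S ∈ G.cycleSpace o

/-- The coordinate functional `e*` restricted to `H₁(Γ,ℝ)`. -/
def edgeFunR (o : G.E → Bool) (e : G.E) : Module.Dual ℝ ↥(G.cycleSpaceR o) :=
  (LinearMap.proj e).comp (G.cycleSpaceR o).subtype

/-! ### Connectivity and regularity -/

/-- The degree (valence) of a vertex; loops count twice. -/
def degree (v : G.V) : ℕ :=
  Nat.card {e : G.E // G.fst e = v} + Nat.card {e : G.E // G.snd e = v}

/-- A graph is 3-regular if every vertex has valence 3. -/
def ThreeRegular : Prop := ∀ v : G.V, G.degree v = 3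

/-- Deletion of a set of vertices, together with all incident edges. -/
def deleteVerts (W : Set G.V) : Multigraph :=
  { V := {v : G.V // v ∉ W}
    E := {e : G.E // G.fst e ∉ W ∧ G.snd e ∉ W}
    fst := fun e => ⟨G.fst e.1, e.2.1⟩
    snd := fun e => ⟨G.snd e.1, e.2.2⟩
    fintV := Fintype.ofFinite _
    fintE := Fintype.ofFinite _ }

/-- 3-edge connectivity: removing any 2 edges leaves the graph connected. -/
def EdgeConnected3 : Prop :=
  Nonempty G.V ∧ ∀ F : Set G.E, Nat.card F ≤ 2 → (G.deleteEdges F).Preconnected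

/-- 3-connectivity: removing any 2 vertices (with incident edges) leaves the graph
connected. -/
def Connected3 : Prop :=
  Nonempty G.V ∧ ∀ W : Set G.V, Nat.card W ≤ 2 → (G.deleteVerts W).Preconnected

/-- Isomorphism of multigraphs. -/
def IsIsoTo (G H : Multigraph) : Prop :=
  ∃ (fV : G.V ≃ H.V) (fE : G.E ≃ H.E), ∀ e : G.E,
    (H.fst (fE e) = fV (G.fst e) ∧ H.snd (fE e) = fV (G.snd e)) ∨
    (H.fst (fE e) = fV (G.snd e) ∧ H.snd (fE e) = fV (G.fst e))

/-- A bijection of edge sets is cyclic if it induces a bijection between cycles. -/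
def IsCyclicBijection (G G' : Multigraph) (ε : G.E ≃ G'.E) : Prop :=
  ∀ S : Set G.E, G.IsCycleSet S ↔ G'.IsCycleSet (⇑ε '' S)

/-- Two orientations are equal as orientations (encodings may differ on loops). -/
def OrientEq (o₁ o₂ : G.E → Bool) : Prop :=
  ∀ e : G.E, G.src o₁ e = G.src o₂ e ∧ G.tgt o₁ e = G.tgt o₂ e

/-- `o` is an orientation of `G` extending the orientation `φ` of `Γ∖T`. -/
def ExtendsOrient (T : Set G.E) (φ : (G.deleteEdges T).E → Bool) (o : G.E → Bool) : Prop :=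
  ∀ e : (G.deleteEdges T).E,
    G.src o e.1 = (G.deleteEdges T).src φ e ∧ G.tgt o e.1 = (G.deleteEdges T).tgt φ e

end Multigraph
section Aux

variable {G : Multigraph}

theorem adj_symm {u v : G.V} (h : G.Adj u v) : G.Adj v u := by
  obtain ⟨f, h | h⟩ := h
  · exact ⟨f, Or.inr h⟩
  · exact ⟨f, Or.inl h⟩

theorem reach_symm {u v : G.V} (h : G.Reachable u v) : G.Reachable v u :=
  (@Relation.ReflTransGen.symmetric _ _ ⟨fun _ _ h => adj_symm h⟩).symm _ _ h

theorem mk_eq_of_reach {u v : G.V} (h : G.Reachable u v) :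
    Quot.mk G.Adj u = Quot.mk G.Adj v := by
  induction h with
  | refl => rfl
  | tail _ h2 ih => exact ih.trans (Quot.sound h2)

theorem mk_eq_iff_reach {u v : G.V} :
    Quot.mk G.Adj u = Quot.mk G.Adj v ↔ G.Reachable u v := by
  constructor
  · intro heq
    have hev := Quot.eq.mp heq
    clear heq
    induction hev with
    | rel a b hab => exact Relation.ReflTransGen.single hab
    | refl => exact Relation.ReflTransGen.refl
    | symm a b _ ih => exact reach_symm ih
    | trans a b c _ _ ih1 ih2 => exact ih1.trans ih2
  · exact mk_eq_of_reach

theorem adj_deleteEdges_empty (X : Multigraph) : (X.deleteEdges ∅).Adj = X.Adj := by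
  funext u v
  apply propext
  constructor
  · rintro ⟨g, h⟩; exact ⟨g.1, h⟩
  · rintro ⟨g, h⟩; exact ⟨⟨g, Set.notMem_empty g⟩, h⟩

theorem adj_dd (X : Multigraph) (A : Set X.E) (B : Set (X.deleteEdges A).E) :
    ((X.deleteEdges A).deleteEdges B).Adj
      = (X.deleteEdges (A ∪ Subtype.val '' B)).Adj := by
  funext u v
  apply propext
  constructor
  · rintro ⟨⟨⟨g, hA⟩, hB⟩, h⟩
    refine ⟨⟨g, ?_⟩, h⟩
    rintro (h1 | ⟨b, hb, hval⟩)
    · exact hA h1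
    · exact hB (by rwa [show b = (⟨g, hA⟩ : (X.deleteEdges A).E) from Subtype.ext hval] at hb)
  · rintro ⟨⟨g, hg⟩, h⟩
    exact ⟨⟨⟨g, fun hA => hg (Or.inl hA)⟩, fun hB => hg (Or.inr ⟨_, hB, rfl⟩)⟩, h⟩

theorem reach_mono (X : Multigraph) {A B : Set X.E} (h : B ⊆ A) {u v : X.V}
    (hr : (X.deleteEdges A).Reachable u v) : (X.deleteEdges B).Reachable u v :=
  Relation.ReflTransGen.mono
    (fun a b hab => by
      obtain ⟨⟨g, hg⟩, hh⟩ := hab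
      exact ⟨⟨g, fun hB => hg (h hB)⟩, hh⟩) _ _ hr

theorem reach_delete_le (X : Multigraph) {A : Set X.E} {u v : X.V}
    (hr : (X.deleteEdges A).Reachable u v) : X.Reachable u v :=
  Relation.ReflTransGen.mono (fun a b hab => by
    obtain ⟨g, hg⟩ := hab; exact ⟨g.1, hg⟩) _ _ hr

theorem reach_delete_or (X : Multigraph) (f : X.E) {u v : X.V} (h : X.Reachable u v) :
    (X.deleteEdges {f}).Reachable u v ∨
      (((X.deleteEdges {f}).Reachable u (X.fst f) ∨ (X.deleteEdges {f}).Reachable u (X.snd f)) ∧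
       ((X.deleteEdges {f}).Reachable (X.fst f) v ∨ (X.deleteEdges {f}).Reachable (X.snd f) v)) := by
  induction h with
  | refl => exact Or.inl Relation.ReflTransGen.refl
  | @tail w x h1 h2 ih =>
    obtain ⟨g, hg⟩ := h2
    by_cases hgf : g = f
    · subst hgf
      right
      constructor
      · rcases ih with hr | hr
        · rcases hg with ⟨h3, _⟩ | ⟨_, h4⟩
          · exact Or.inl (h3 ▸ hr)
          · exact Or.inr (h4 ▸ hr)
        · exact hr.1
      · rcases hg with ⟨_, h4⟩ | ⟨h3, _⟩
        · exact Or.inr (h4 ▸ Relation.ReflTransGen.refl)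
        · exact Or.inl (h3 ▸ Relation.ReflTransGen.refl)
    · have step : (X.deleteEdges {f}).Adj w x := ⟨⟨g, fun hm => hgf hm⟩, hg⟩
      rcases ih with hr | ⟨hr1, hr2⟩
      · exact Or.inl (hr.tail step)
      · exact Or.inr ⟨hr1, hr2.imp (·.tail step) (·.tail step)⟩

end Aux
section Aux2

theorem reach_delete_insert (G : Multigraph) {F : Set G.E} {b : G.E}
    (hsep : G.IsSeparating b) {u v : G.V}
    (h1 : (G.deleteEdges F).Reachable u v)
    (h2 : (G.deleteEdges {b}).Reachable u v) :
    (G.deleteEdges (insert b F)).Reachable u v := by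
  by_cases hb : b ∈ F
  · rwa [Set.insert_eq_self.mpr hb]
  · have hAdj : ((G.deleteEdges F).deleteEdges {(⟨b, hb⟩ : (G.deleteEdges F).E)}).Adj
        = (G.deleteEdges (insert b F)).Adj := by
      erw [adj_dd, Set.image_singleton, Set.union_singleton]
    have tr : ∀ {x y : G.V},
        ((G.deleteEdges F).deleteEdges {(⟨b, hb⟩ : (G.deleteEdges F).E)}).Reachable x y →
          (G.deleteEdges (insert b F)).Reachable x y := by
      intro x y h
      unfold Multigraph.Reachable at h ⊢
      rwa [hAdj] at h
    have mono' : ∀ {x y : G.V}, (G.deleteEdges (insert b F)).Reachable x y →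
        (G.deleteEdges {b}).Reachable x y :=
      fun h => reach_mono G (Set.singleton_subset_iff.mpr (Set.mem_insert b F)) h
    rcases reach_delete_or (G.deleteEdges F) ⟨b, hb⟩ h1 with hr | ⟨hu, hv⟩
    · exact tr hr
    · rcases hu with hu | hu <;> rcases hv with hv | hv
      · exact (tr hu).trans (tr hv)
      · -- u ~ fst b, snd b ~ v : contradiction with hsep
        exact absurd (((reach_symm (mono' (tr hu))).trans h2).trans
          (reach_symm (mono' (tr hv)))) hsep
      · exact absurd (((mono' (tr hv)).trans (reach_symm h2)).trans
          (mono' (tr hu))) hsep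
      · exact (tr hu).trans (tr hv)

theorem reach_delete_union (G : Multigraph) {F T : Set G.E}
    (hT : ∀ b ∈ T, G.IsSeparating b) {u v : G.V}
    (h1 : (G.deleteEdges F).Reachable u v)
    (h2 : ∀ b ∈ T, (G.deleteEdges {b}).Reachable u v) :
    (G.deleteEdges (F ∪ T)).Reachable u v := by
  have main : ∀ T' : Set G.E, T'.Finite → (∀ b ∈ T', G.IsSeparating b) →
      (∀ b ∈ T', (G.deleteEdges {b}).Reachable u v) →
      ∀ F' : Set G.E, (G.deleteEdges F').Reachable u v →
      (G.deleteEdges (F' ∪ T')).Reachable u v := by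
    intro T' hfin
    refine Set.Finite.induction_on (motive := fun T' _ => (∀ b ∈ T', G.IsSeparating b) →
      (∀ b ∈ T', (G.deleteEdges {b}).Reachable u v) →
      ∀ F' : Set G.E, (G.deleteEdges F').Reachable u v →
      (G.deleteEdges (F' ∪ T')).Reachable u v) T' hfin ?_ ?_
    · intro _ _ F' h1'; rwa [Set.union_empty]
    · intro b T'' hbT hTfin ih hsep h2' F' h1'
      have h1'' := reach_delete_insert G (hsep b (Set.mem_insert _ _)) h1'
        (h2' b (Set.mem_insert _ _))
      have := ih (fun c hc => hsep c (Set.mem_insert_of_mem _ hc))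
        (fun c hc => h2' c (Set.mem_insert_of_mem _ hc)) (insert b F') h1''
      rwa [show insert b F' ∪ T'' = F' ∪ insert b T'' by
        rw [Set.insert_union, Set.union_insert]] at this
  exact main T T.toFinite hT h2 F h1

theorem precon_delete (G : Multigraph) {F : Set G.E} (hpre : G.Preconnected)
    (hF : ∀ f ∈ F, (G.deleteEdges F).Reachable (G.fst f) (G.snd f)) :
    (G.deleteEdges F).Preconnected := by
  intro u v
  have h := hpre u v
  induction h with
  | refl => exact Relation.ReflTransGen.refl
  | @tail w x h1 h2 ih =>
    obtain ⟨g, hg⟩ := h2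
    by_cases hgF : g ∈ F
    · rcases hg with ⟨h3, h4⟩ | ⟨h3, h4⟩
      · exact ih.trans (h3 ▸ h4 ▸ hF g hgF)
      · exact ih.trans (reach_symm (h3 ▸ h4 ▸ hF g hgF))
    · exact ih.tail ⟨⟨g, hgF⟩, hg⟩

end Aux2
section Aux3

theorem quot_ind2 {α : Sort*} {β : Sort*} {r : α → α → Prop} {s : β → β → Prop}
    {motive : Quot r → Quot s → Prop}
    (h : ∀ a b, motive (Quot.mk r a) (Quot.mk s b)) : ∀ x y, motive x y :=
  fun x y => Quot.ind (β := fun x => motive x y)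
    (fun a => Quot.ind (β := fun y => motive (Quot.mk r a) y) (fun b => h a b) y) x

theorem quot_key (X : Multigraph) (f : X.E) (a b : X.V) (hxy : X.Reachable a b) :
    Quot.mk (X.deleteEdges {f}).Adj a = Quot.mk (X.deleteEdges {f}).Adj b ∨
      ((Quot.mk (X.deleteEdges {f}).Adj a = Quot.mk (X.deleteEdges {f}).Adj (X.fst f) ∨
        Quot.mk (X.deleteEdges {f}).Adj a = Quot.mk (X.deleteEdges {f}).Adj (X.snd f)) ∧
       (Quot.mk (X.deleteEdges {f}).Adj b = Quot.mk (X.deleteEdges {f}).Adj (X.fst f) ∨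
        Quot.mk (X.deleteEdges {f}).Adj b = Quot.mk (X.deleteEdges {f}).Adj (X.snd f))) := by
  rcases reach_delete_or X f hxy with h | ⟨h1, h2⟩
  · exact Or.inl (mk_eq_of_reach h)
  · exact Or.inr ⟨h1.imp mk_eq_of_reach mk_eq_of_reach,
      h2.imp (fun h => (mk_eq_of_reach h).symm) (fun h => (mk_eq_of_reach h).symm)⟩

theorem card_quot_delete_le (X : Multigraph) (f : X.E) :
    Nat.card (Quot (X.deleteEdges {f}).Adj) ≤ Nat.card (Quot X.Adj) + 1 := by
  classical
  let φ : Quot (X.deleteEdges {f}).Adj → Quot X.Adj :=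
    Quot.lift (Quot.mk X.Adj) (fun a b h => Quot.sound (by
      obtain ⟨g, hg⟩ := h; exact ⟨g.1, hg⟩))
  let ψ : Quot (X.deleteEdges {f}).Adj → Quot X.Adj ⊕ Unit := fun x =>
    if x = Quot.mk (X.deleteEdges {f}).Adj (X.snd f) then Sum.inr () else Sum.inl (φ x)
  have hinj : Function.Injective ψ := by
    intro x y h
    simp only [ψ] at h
    by_cases hx : x = Quot.mk (X.deleteEdges {f}).Adj (X.snd f) <;>
      by_cases hy : y = Quot.mk (X.deleteEdges {f}).Adj (X.snd f)
    · exact hx.trans hy.symm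
    · rw [if_pos hx, if_neg hy] at h; exact absurd h (by simp)
    · rw [if_neg hx, if_pos hy] at h; exact absurd h (by simp)
    · rw [if_neg hx, if_neg hy] at h
      have h' : φ x = φ y := Sum.inl.inj h
      clear h
      revert hx hy h'
      induction x using Quot.ind
      rename_i a
      induction y using Quot.ind
      rename_i b
      intro hx hy h'
      have hab : X.Reachable a b := mk_eq_iff_reach.mp h'
      rcases quot_key X f a b hab with h'' | ⟨ha | ha, hb | hb⟩
      · exact h''
      · exact ha.trans hb.symm
      · exact absurd hb hy
      · exact absurd ha hx
      · exact absurd ha hx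
  have := Nat.card_le_card_of_injective ψ hinj
  rw [Nat.card_sum] at this
  simpa using this

theorem edge_adj_delete (X : Multigraph) {D : Set X.E} {g : X.E} (hg : g ∉ D) :
    (X.deleteEdges D).Adj (X.fst g) (X.snd g) := ⟨⟨g, hg⟩, Or.inl ⟨rfl, rfl⟩⟩

theorem card_quot_delete_sep (X : Multigraph) {f : X.E} (hsep : X.IsSeparating f) :
    Nat.card (Quot (X.deleteEdges {f}).Adj) = Nat.card (Quot X.Adj) + 1 := by
  classical
  refine le_antisymm (card_quot_delete_le X f) ?_
  let g : Quot X.Adj ⊕ Unit → Quot (X.deleteEdges {f}).Adj := fun z =>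
    match z with
    | Sum.inr _ => Quot.mk _ (X.snd f)
    | Sum.inl q => if q = Quot.mk X.Adj (X.fst f) then Quot.mk _ (X.fst f)
        else Quot.mk _ q.out
  have houtr : ∀ q : Quot X.Adj, ∀ c : X.V,
      (X.deleteEdges {f}).Reachable q.out c → q = Quot.mk X.Adj c := by
    intro q c h
    have : X.Reachable q.out c := reach_delete_le X h
    rw [← Quot.out_eq q]
    exact mk_eq_of_reach this
  have hinj : Function.Injective g := by
    intro z z' h
    match z, z' with
    | Sum.inr _, Sum.inr _ => rfl
    | Sum.inl q, Sum.inr _ =>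
      by_cases hq : q = Quot.mk X.Adj (X.fst f)
      · simp only [g, hq, if_pos, reduceIte] at h
        exact absurd (mk_eq_iff_reach.mp h) hsep
      · simp only [g, hq, if_neg, reduceIte] at h
        have := houtr q (X.snd f) (mk_eq_iff_reach.mp h)
        have h2 : Quot.mk X.Adj (X.snd f) = Quot.mk X.Adj (X.fst f) :=
          Quot.sound (adj_symm ⟨f, Or.inl ⟨rfl, rfl⟩⟩)
        exact absurd (this.trans h2) hq
    | Sum.inr _, Sum.inl q =>
      by_cases hq : q = Quot.mk X.Adj (X.fst f)
      · simp only [g, hq, if_pos, reduceIte] at h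
        exact absurd (mk_eq_iff_reach.mp h.symm) hsep
      · simp only [g, hq, if_neg, reduceIte] at h
        have := houtr q (X.snd f) (mk_eq_iff_reach.mp h.symm)
        have h2 : Quot.mk X.Adj (X.snd f) = Quot.mk X.Adj (X.fst f) :=
          Quot.sound (adj_symm ⟨f, Or.inl ⟨rfl, rfl⟩⟩)
        exact absurd (this.trans h2) hq
    | Sum.inl q, Sum.inl q' =>
      by_cases hq : q = Quot.mk X.Adj (X.fst f) <;>
        by_cases hq' : q' = Quot.mk X.Adj (X.fst f) <;>
        simp only [g, hq, hq', if_pos, if_neg, reduceIte] at h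
      · rw [hq, hq']
      · exact absurd (houtr q' (X.fst f) (mk_eq_iff_reach.mp h.symm)) hq'
      · exact absurd (houtr q (X.fst f) (mk_eq_iff_reach.mp h)) hq
      · have r1 := houtr q q'.out (mk_eq_iff_reach.mp h)
        rw [Quot.out_eq] at r1
        exact congrArg Sum.inl r1
  have := Nat.card_le_card_of_injective g hinj
  rw [Nat.card_sum] at this
  simpa using this

theorem card_quot_delete_nonsep (X : Multigraph) {f : X.E} (hns : ¬ X.IsSeparating f) :
    Nat.card (Quot (X.deleteEdges {f}).Adj) = Nat.card (Quot X.Adj) := by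
  have hreach : (X.deleteEdges {f}).Reachable (X.fst f) (X.snd f) := not_not.mp hns
  have hfs : Quot.mk (X.deleteEdges {f}).Adj (X.fst f)
      = Quot.mk (X.deleteEdges {f}).Adj (X.snd f) := mk_eq_of_reach hreach
  let φ : Quot (X.deleteEdges {f}).Adj → Quot X.Adj :=
    Quot.lift (Quot.mk X.Adj) (fun a b h => Quot.sound (by
      obtain ⟨g, hg⟩ := h; exact ⟨g.1, hg⟩))
  refine Nat.card_eq_of_bijective φ ⟨?_, ?_⟩
  · intro x y h
    revert h
    induction x using Quot.ind
    rename_i a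
    induction y using Quot.ind
    rename_i b
    intro h
    have hab : X.Reachable a b := mk_eq_iff_reach.mp h
    rcases quot_key X f a b hab with h'' | ⟨ha | ha, hb | hb⟩
    · exact h''
    · exact ha.trans hb.symm
    · exact ha.trans (hfs.trans hb.symm)
    · exact ha.trans (hfs.symm.trans hb.symm)
    · exact ha.trans hb.symm
  · intro q
    exact Quot.ind (β := fun q => ∃ p, φ p = q) (fun a => ⟨Quot.mk _ a, rfl⟩) q

theorem numComponents_eq_one (X : Multigraph) (h : X.Connected) : X.numComponents = 1 := by
  obtain ⟨hne, hpre⟩ := h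
  rw [Multigraph.numComponents, Nat.card_eq_one_iff_unique]
  refine ⟨⟨fun x y => ?_⟩, ⟨Quot.mk _ hne.some⟩⟩
  induction x using Quot.ind
  rename_i a
  induction y using Quot.ind
  rename_i b
  exact mk_eq_of_reach (hpre a b)

theorem card_E_delete (X : Multigraph) (D : Set X.E) :
    Nat.card (X.deleteEdges D).E = Dᶜ.ncard :=
  Nat.card_coe_set_eq Dᶜ

end Aux3
section Aux4

theorem b1_nonneg (X : Multigraph) : 0 ≤ X.b1 := by
  suffices h : ∀ n (X : Multigraph), Nat.card X.E = n → 0 ≤ X.b1 from h _ X rfl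
  intro n
  induction n using Nat.strong_induction_on with
  | _ n ih =>
    intro X hn
    rcases isEmpty_or_nonempty X.E with hE | hE
    · have hb : Function.Bijective (Quot.mk X.Adj) := by
        constructor
        · intro a b hab
          have hev := Quot.eq.mp hab
          clear hab
          induction hev with
          | rel a b hab => exact (hE.false hab.choose).elim
          | refl => rfl
          | symm a b _ ih => exact ih.symm
          | trans a b c _ _ ih1 ih2 => exact ih1.trans ih2
        · exact fun q => Quot.exists_rep q
      have hV : Nat.card X.V = Nat.card (Quot X.Adj) := Nat.card_eq_of_bijective _ hb
      have hE0 : Nat.card X.E = 0 := Nat.card_of_isEmpty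
      unfold Multigraph.b1 Multigraph.numComponents
      rw [← hV, hE0]
      simp
    · have hn1 : 1 ≤ n := by
        rw [← hn]
        haveI := hE
        exact Nat.card_pos
      obtain ⟨f⟩ := hE
      have hEdel : Nat.card (X.deleteEdges {f}).E = n - 1 := by
        rw [card_E_delete]
        have := Set.ncard_add_ncard_compl ({f} : Set X.E)
        rw [Set.ncard_singleton] at this
        omega
      have hc := card_quot_delete_le X f
      have ihX := ih (n - 1) (by omega) (X.deleteEdges {f}) hEdel
      have hVd : Nat.card (X.deleteEdges {f}).V = Nat.card X.V := rfl
      unfold Multigraph.b1 Multigraph.numComponents at ihX ⊢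
      rw [hEdel, hVd] at ihX
      rw [hn]
      omega

theorem sep_mono (G : Multigraph) {F : Set G.E} {b : G.E} (hsep : G.IsSeparating b)
    (hbF : b ∉ F) : (G.deleteEdges F).IsSeparating ⟨b, hbF⟩ := by
  intro hre
  apply hsep
  have h1 : (G.deleteEdges (F ∪ Subtype.val '' {(⟨b, hbF⟩ : (G.deleteEdges F).E)})).Reachable
      (G.fst b) (G.snd b) := by
    unfold Multigraph.Reachable at hre ⊢
    rwa [adj_dd] at hre
  rw [Set.image_singleton] at h1
  exact reach_mono G (by intro x hx; exact Or.inr (by rwa [Set.mem_singleton_iff] at hx ⊢)) h1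

theorem card_quot_delete_sepset (G : Multigraph) {T : Set G.E}
    (hT : ∀ b ∈ T, G.IsSeparating b) :
    Nat.card (Quot (G.deleteEdges T).Adj) = Nat.card (Quot G.Adj) + T.ncard := by
  have main : ∀ T' : Set G.E, T'.Finite → (∀ b ∈ T', G.IsSeparating b) →
      Nat.card (Quot (G.deleteEdges T').Adj) = Nat.card (Quot G.Adj) + T'.ncard := by
    intro T' hfin
    refine Set.Finite.induction_on (motive := fun T' _ => (∀ b ∈ T', G.IsSeparating b) →
      Nat.card (Quot (G.deleteEdges T').Adj) = Nat.card (Quot G.Adj) + T'.ncard)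
      T' hfin ?_ ?_
    · intro _
      rw [adj_deleteEdges_empty]
      simp; rfl
    · intro b T'' hbT hTfin ihT hsep
      have hsepT : (G.deleteEdges T'').IsSeparating ⟨b, hbT⟩ :=
        sep_mono G (hsep b (Set.mem_insert _ _)) hbT
      have hAdj : (G.deleteEdges (insert b T'')).Adj
          = ((G.deleteEdges T'').deleteEdges {(⟨b, hbT⟩ : (G.deleteEdges T'').E)}).Adj := by
        erw [adj_dd, Set.image_singleton, Set.union_singleton]
      erw [hAdj, card_quot_delete_sep _ hsepT,
        ihT (fun c hc => hsep c (Set.mem_insert_of_mem _ hc)),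
        Set.ncard_insert_of_notMem hbT hTfin]
      omega
  exact main T T.toFinite hT

end Aux4
section Aux5

abbrev nonIso (X : Multigraph) (v : X.V) : Prop :=
  ∃ g ∈ (Set.univ : Set X.E), X.fst g = v ∨ X.snd g = v

theorem reach_core_delete (X : Multigraph) (D : Set X.E) {u v : X.V}
    (hu : nonIso X u) (h : (X.deleteEdges D).Reachable u v) :
    v = u ∨ ∃ hv : nonIso X v,
      (X.core.deleteEdges {g : X.core.E | g.1 ∈ D}).Reachable ⟨u, hu⟩ ⟨v, hv⟩ := by
  induction h with
  | refl => exact Or.inl rfl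
  | @tail w x h1 h2 ih =>
    obtain ⟨⟨g, hgD⟩, hg⟩ := h2
    have hw : nonIso X w := by
      rcases hg with ⟨h3, _⟩ | ⟨_, h4⟩
      · exact ⟨g, Set.mem_univ g, Or.inl h3⟩
      · exact ⟨g, Set.mem_univ g, Or.inr h4⟩
    have hx : nonIso X x := by
      rcases hg with ⟨_, h4⟩ | ⟨h3, _⟩
      · exact ⟨g, Set.mem_univ g, Or.inr h4⟩
      · exact ⟨g, Set.mem_univ g, Or.inl h3⟩
    have step : (X.core.deleteEdges {g : X.core.E | g.1 ∈ D}).Adj ⟨w, hw⟩ ⟨x, hx⟩ := by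
      refine ⟨⟨⟨g, Set.mem_univ g⟩, hgD⟩, ?_⟩
      rcases hg with ⟨h3, h4⟩ | ⟨h3, h4⟩
      · exact Or.inl ⟨Subtype.ext h3, Subtype.ext h4⟩
      · exact Or.inr ⟨Subtype.ext h3, Subtype.ext h4⟩
    right
    refine ⟨hx, ?_⟩
    rcases ih with rfl | ⟨hw', hr⟩
    · exact Relation.ReflTransGen.single step
    · exact hr.tail step

theorem reach_contract (X : Multigraph) (A D : Set X.E) {u v : X.V}
    (h : (X.deleteEdges D).Reachable u v) :
    ((X.contractCompl A).deleteEdges {s : (X.contractCompl A).E | s.1 ∈ D}).Reachable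
      (Quot.mk (X.deleteEdges A).Adj u) (Quot.mk (X.deleteEdges A).Adj v) := by
  induction h with
  | refl => exact Relation.ReflTransGen.refl
  | @tail w x h1 h2 ih =>
    obtain ⟨⟨g, hgD⟩, hg⟩ := h2
    by_cases hgA : g ∈ A
    · refine ih.tail ⟨⟨⟨g, hgA⟩, hgD⟩, ?_⟩
      rcases hg with ⟨h3, h4⟩ | ⟨h3, h4⟩
      · exact Or.inl ⟨congrArg _ h3, congrArg _ h4⟩
      · exact Or.inr ⟨congrArg _ h3, congrArg _ h4⟩
    · have hq : Quot.mk (X.deleteEdges A).Adj w = Quot.mk (X.deleteEdges A).Adj x :=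
        Quot.sound ⟨⟨g, hgA⟩, hg⟩
      rwa [hq] at ih

theorem card_quot_contract (X : Multigraph) (A : Set X.E) :
    Nat.card (Quot (X.contractCompl A).Adj) = Nat.card (Quot X.Adj) := by
  let α : Quot (X.contractCompl A).Adj → Quot X.Adj :=
    Quot.lift (Quot.lift (Quot.mk X.Adj)
      (fun a b hab => Quot.sound (by obtain ⟨g, hg⟩ := hab; exact ⟨g.1, hg⟩)))
      (by
        intro p q hpq
        obtain ⟨s, hs⟩ := hpq
        rcases hs with ⟨h3, h4⟩ | ⟨h3, h4⟩ <;> rw [← h3, ← h4]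
        · exact Quot.sound ⟨s.1, Or.inl ⟨rfl, rfl⟩⟩
        · exact Quot.sound ⟨s.1, Or.inr ⟨rfl, rfl⟩⟩)
  let β : Quot X.Adj → Quot (X.contractCompl A).Adj :=
    Quot.lift (fun x => Quot.mk (X.contractCompl A).Adj (Quot.mk (X.deleteEdges A).Adj x))
      (by
        intro a b hab
        obtain ⟨g, hg⟩ := hab
        by_cases hgA : g ∈ A
        · refine Quot.sound ⟨⟨g, hgA⟩, ?_⟩
          rcases hg with ⟨h3, h4⟩ | ⟨h3, h4⟩
          · exact Or.inl ⟨congrArg _ h3, congrArg _ h4⟩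
          · exact Or.inr ⟨congrArg _ h3, congrArg _ h4⟩
        · exact congrArg _ (Quot.sound ⟨⟨g, hgA⟩, hg⟩))
  have li : Function.LeftInverse β α := by
    intro z
    induction z using Quot.ind
    rename_i p
    induction p using Quot.ind
    simp only [α, β]
  have ri : Function.RightInverse β α := by
    intro z
    induction z using Quot.ind
    simp only [α, β]
  exact Nat.card_eq_of_bijective α ⟨li.injective, ri.surjective⟩

theorem iso_reach_eq (X : Multigraph) {w y : X.V} (h : X.Reachable w y)
    (hw : ¬ nonIso X w) : y = w := by
  rcases Relation.ReflTransGen.cases_head h with h' | ⟨c, hc, _⟩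
  · exact h'.symm
  · refine absurd ?_ hw
    obtain ⟨g, hg⟩ := hc
    rcases hg with ⟨h3, _⟩ | ⟨_, h4⟩
    · exact ⟨g, Set.mem_univ g, Or.inl h3⟩
    · exact ⟨g, Set.mem_univ g, Or.inr h4⟩

theorem core_reach (X : Multigraph) {x y : X.V} (h : X.Reachable x y) (hx : nonIso X x)
    (hy : nonIso X y) : X.core.Reachable ⟨x, hx⟩ ⟨y, hy⟩ := by
  have h0 : (X.deleteEdges ∅).Reachable x y := by
    unfold Multigraph.Reachable at h ⊢
    rwa [adj_deleteEdges_empty]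
  rcases reach_core_delete X ∅ hx h0 with h' | ⟨hv, hr⟩
  · cases h'
    exact Relation.ReflTransGen.refl
  · have hset : {g : X.core.E | g.1 ∈ (∅ : Set X.E)} = (∅ : Set X.core.E) := by
      ext g; simp
    rw [hset] at hr
    unfold Multigraph.Reachable at hr ⊢
    rwa [adj_deleteEdges_empty] at hr

theorem card_core_V (X : Multigraph) :
    Nat.card X.V = Nat.card X.core.V + Nat.card {v : X.V // ¬ nonIso X v} := by
  classical
  rw [← Nat.card_sum]
  exact (Nat.card_congr (Equiv.sumCompl (nonIso X))).symm

theorem card_core_quot (X : Multigraph) :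
    Nat.card (Quot X.Adj)
      = Nat.card (Quot X.core.Adj) + Nat.card {v : X.V // ¬ nonIso X v} := by
  classical
  let θ : Quot X.core.Adj ⊕ {v : X.V // ¬ nonIso X v} → Quot X.Adj := fun z =>
    match z with
    | Sum.inl q => Quot.lift (fun z : X.core.V => Quot.mk X.Adj z.1)
        (fun a b hab => Quot.sound (by
          obtain ⟨g, hg⟩ := hab
          rcases hg with ⟨h3, h4⟩ | ⟨h3, h4⟩
          · exact ⟨g.1, Or.inl ⟨congrArg Subtype.val h3, congrArg Subtype.val h4⟩⟩
          · exact ⟨g.1, Or.inr ⟨congrArg Subtype.val h3, congrArg Subtype.val h4⟩⟩)) q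
    | Sum.inr w => Quot.mk X.Adj w.1
  have hinj : Function.Injective θ := by
    intro z z' h
    match z, z' with
    | Sum.inl q, Sum.inl q' =>
      revert h
      induction q using Quot.ind
      rename_i a
      induction q' using Quot.ind
      rename_i b
      intro h
      have h' : Quot.mk X.Adj a.1 = Quot.mk X.Adj b.1 := h
      have hr := core_reach X (mk_eq_iff_reach.mp h') a.2 b.2
      exact congrArg Sum.inl (mk_eq_of_reach hr)
    | Sum.inl q, Sum.inr w =>
      revert h
      induction q using Quot.ind
      rename_i a
      intro h
      have h' : Quot.mk X.Adj a.1 = Quot.mk X.Adj w.1 := h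
      have heq := iso_reach_eq X (reach_symm (mk_eq_iff_reach.mp h')) w.2
      exact absurd (heq ▸ a.2) w.2
    | Sum.inr w, Sum.inl q =>
      revert h
      induction q using Quot.ind
      rename_i a
      intro h
      have h' : Quot.mk X.Adj w.1 = Quot.mk X.Adj a.1 := h
      have heq := iso_reach_eq X (mk_eq_iff_reach.mp h') w.2
      exact absurd (heq ▸ a.2) w.2
    | Sum.inr w, Sum.inr w' =>
      have h' : Quot.mk X.Adj w.1 = Quot.mk X.Adj w'.1 := h
      have heq := iso_reach_eq X (mk_eq_iff_reach.mp h') w.2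
      exact congrArg Sum.inr (Subtype.ext heq.symm)
  have hsurj : Function.Surjective θ := by
    intro q
    induction q using Quot.ind
    rename_i a
    by_cases ha : nonIso X a
    · exact ⟨Sum.inl (Quot.mk _ ⟨a, ha⟩), rfl⟩
    · exact ⟨Sum.inr ⟨a, ha⟩, rfl⟩
  rw [← Nat.card_eq_of_bijective θ ⟨hinj, hsurj⟩, Nat.card_sum]

end Aux5
section Aux6

/-- In a cycle graph, deleting two distinct edges separates the endpoints of the second. -/
theorem cycle_two_edges_sep (C : Multigraph) (hcyc : C.IsCycleGraph) (a b : C.E)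
    (hab : a ≠ b) : ¬ (C.deleteEdges {a, b}).Reachable (C.fst b) (C.snd b) := by
  obtain ⟨hconn, hsep, hb1⟩ := hcyc
  intro hre
  have hnsa : (C.deleteEdges {a}).Reachable (C.fst a) (C.snd a) := by
    have h1 : a ∉ C.sepEdges := by rw [hsep]; exact Set.notMem_empty a
    exact not_not.mp h1
  have hpre1 : (C.deleteEdges {a}).Preconnected :=
    precon_delete C hconn.2 (by
      intro f hf
      rw [Set.mem_singleton_iff] at hf
      subst hf
      exact hnsa)
  have hbna : b ∉ ({a} : Set C.E) := by
    rw [Set.mem_singleton_iff]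
    exact fun h => hab h.symm
  have hAdj : ((C.deleteEdges {a}).deleteEdges
        {(⟨b, hbna⟩ : (C.deleteEdges {a}).E)}).Adj
      = (C.deleteEdges {a, b}).Adj := by
    erw [adj_dd, Set.image_singleton, Set.union_singleton, Set.pair_comm b a]
  have hre2 : ((C.deleteEdges {a}).deleteEdges
      {(⟨b, hbna⟩ : (C.deleteEdges {a}).E)}).Reachable (C.fst b) (C.snd b) := by
    unfold Multigraph.Reachable at hre ⊢
    rwa [hAdj]
  have hpre2 : ((C.deleteEdges {a}).deleteEdges
      {(⟨b, hbna⟩ : (C.deleteEdges {a}).E)}).Preconnected :=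
    precon_delete (C.deleteEdges {a}) hpre1 (by
      intro f hf
      erw [Set.mem_singleton_iff] at hf
      subst hf
      exact hre2)
  have hne : Nonempty C.V := hconn.1
  have hc1 := numComponents_eq_one C hconn
  have hmC : 2 ≤ Nat.card C.E := by
    haveI : Nontrivial C.E := ⟨a, b, hab⟩
    exact Finite.one_lt_card
  have n1 : Nat.card (C.deleteEdges {a}).E + 1 = Nat.card C.E := by
    rw [card_E_delete]
    have h2 := Set.ncard_add_ncard_compl ({a} : Set C.E)
    rw [Set.ncard_singleton] at h2
    omega
  have n2 : Nat.card ((C.deleteEdges {a}).deleteEdges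
        {(⟨b, hbna⟩ : (C.deleteEdges {a}).E)}).E + 1
      = Nat.card (C.deleteEdges {a}).E := by
    rw [card_E_delete]
    have h2 := Set.ncard_add_ncard_compl
      ({(⟨b, hbna⟩ : (C.deleteEdges {a}).E)} : Set (C.deleteEdges {a}).E)
    erw [Set.ncard_singleton] at h2
    omega
  have hb1X2 := b1_nonneg ((C.deleteEdges {a}).deleteEdges
      {(⟨b, hbna⟩ : (C.deleteEdges {a}).E)})
  have hcX2 : ((C.deleteEdges {a}).deleteEdges
      {(⟨b, hbna⟩ : (C.deleteEdges {a}).E)}).numComponents = 1 :=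
    numComponents_eq_one _ ⟨hne, hpre2⟩
  have hVX2 : Nat.card ((C.deleteEdges {a}).deleteEdges
      {(⟨b, hbna⟩ : (C.deleteEdges {a}).E)}).V = Nat.card C.V := rfl
  unfold Multigraph.b1 at hb1 hb1X2
  rw [hc1] at hb1
  rw [hcX2, hVX2] at hb1X2
  omega

end Aux6
section Aux7

theorem forward_dir (G : Multigraph) (hconn : G.Connected) (e e' : G.E) (hne : e ≠ e')
    (he : ¬ G.IsSeparating e) (he' : ¬ G.IsSeparating e')
    (S : Set G.E) (hS : G.IsC1 S) (heS : e ∈ S) (he'S : e' ∈ S) :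
    ¬ (G.deleteEdges {e, e'}).Preconnected := by
  intro hpre
  obtain ⟨hnonsep, hcyc, -⟩ := hS
  have heT : e ∉ G.sepEdges := he
  have he'T : e' ∉ G.sepEdges := he'
  -- Step 2: reach in G ∖ ({e,e'} ∪ sepEdges)
  have hre0 : (G.deleteEdges {e, e'}).Reachable (G.fst e') (G.snd e') := hpre _ _
  have hreb : ∀ b ∈ G.sepEdges, (G.deleteEdges {b}).Reachable (G.fst e') (G.snd e') := by
    intro b hb
    refine Relation.ReflTransGen.single (edge_adj_delete G ?_)
    intro hm
    rw [Set.mem_singleton_iff] at hm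
    subst hm
    exact he'T hb
  have hre1 : (G.deleteEdges ({e, e'} ∪ G.sepEdges)).Reachable (G.fst e') (G.snd e') :=
    reach_delete_union G (fun b hb => hb) hre0 hreb
  -- transport to (G∖sepEdges) ∖ {f | f.1 ∈ {e,e'}}
  have himg : Subtype.val '' {f : (G.deleteEdges G.sepEdges).E | f.1 ∈ ({e, e'} : Set G.E)}
      = ({e, e'} : Set G.E) := by
    ext g
    constructor
    · rintro ⟨f, hf, rfl⟩
      exact hf
    · intro hg
      have hgT : g ∉ G.sepEdges := by
        rcases hg with rfl | hg
        · exact heT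
        · rw [Set.mem_singleton_iff] at hg
          subst hg
          exact he'T
      exact ⟨⟨g, hgT⟩, hg, rfl⟩
  have hAdjH : ((G.deleteEdges G.sepEdges).deleteEdges
        {f : (G.deleteEdges G.sepEdges).E | f.1 ∈ ({e, e'} : Set G.E)}).Adj
      = (G.deleteEdges ({e, e'} ∪ G.sepEdges)).Adj := by
    erw [adj_dd, himg, Set.union_comm]
  have hre2 : ((G.deleteEdges G.sepEdges).deleteEdges
      {f : (G.deleteEdges G.sepEdges).E | f.1 ∈ ({e, e'} : Set G.E)}).Reachable
      (G.fst e') (G.snd e') := by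
    unfold Multigraph.Reachable at hre1 ⊢
    rwa [hAdjH]
  have hre3 := reach_contract (G.deleteEdges G.sepEdges)
    {f : (G.deleteEdges G.sepEdges).E | f.1 ∈ S}
    {f : (G.deleteEdges G.sepEdges).E | f.1 ∈ ({e, e'} : Set G.E)} hre2
  -- noniso of the endpoint classes
  have hu : nonIso ((G.deleteEdges G.sepEdges).contractCompl
      {f : (G.deleteEdges G.sepEdges).E | f.1 ∈ S})
      (Quot.mk ((G.deleteEdges G.sepEdges).deleteEdges
        {f : (G.deleteEdges G.sepEdges).E | f.1 ∈ S}).Adj (G.fst e')) :=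
    ⟨⟨⟨e', he'T⟩, he'S⟩, Set.mem_univ _, Or.inl rfl⟩
  -- cycle edges
  have hneC : (⟨⟨⟨e, heT⟩, heS⟩, Set.mem_univ _⟩ :
        (((G.deleteEdges G.sepEdges).contractCompl
          {f : (G.deleteEdges G.sepEdges).E | f.1 ∈ S}).core).E)
      ≠ ⟨⟨⟨e', he'T⟩, he'S⟩, Set.mem_univ _⟩ := by
    intro h
    exact hne (congrArg (fun x => x.1.1.1) h)
  have hns := cycle_two_edges_sep _ hcyc _ _ hneC
  -- set identification
  have hDset : {g : (((G.deleteEdges G.sepEdges).contractCompl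
        {f : (G.deleteEdges G.sepEdges).E | f.1 ∈ S}).core).E |
        g.1 ∈ {s : ((G.deleteEdges G.sepEdges).contractCompl
          {f : (G.deleteEdges G.sepEdges).E | f.1 ∈ S}).E |
          s.1 ∈ {f : (G.deleteEdges G.sepEdges).E | f.1 ∈ ({e, e'} : Set G.E)}}}
      = {⟨⟨⟨e, heT⟩, heS⟩, Set.mem_univ _⟩, ⟨⟨⟨e', he'T⟩, he'S⟩, Set.mem_univ _⟩} := by
    ext g
    simp only [Set.mem_setOf_eq, Set.mem_insert_iff, Set.mem_singleton_iff]
    constructor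
    · intro hg
      rcases hg with h | h
      · exact Or.inl (Subtype.ext (Subtype.ext (Subtype.ext h)))
      · exact Or.inr (Subtype.ext (Subtype.ext (Subtype.ext h)))
    · intro hg
      rcases hg with rfl | rfl
      · exact Or.inl rfl
      · exact Or.inr rfl
  rcases reach_core_delete _ _ hu hre3 with heq | ⟨hv, hr⟩
  · apply hns
    have hfs : (((G.deleteEdges G.sepEdges).contractCompl
        {f : (G.deleteEdges G.sepEdges).E | f.1 ∈ S}).core).snd
          ⟨⟨⟨e', he'T⟩, he'S⟩, Set.mem_univ _⟩
        = (((G.deleteEdges G.sepEdges).contractCompl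
        {f : (G.deleteEdges G.sepEdges).E | f.1 ∈ S}).core).fst
          ⟨⟨⟨e', he'T⟩, he'S⟩, Set.mem_univ _⟩ := Subtype.ext heq
    rw [hfs]
    exact Relation.ReflTransGen.refl
  · apply hns
    rw [hDset] at hr
    exact hr

end Aux7
section Aux8

theorem reach_delete_or' (G : Multigraph) (F : Set G.E) (b : G.E) (hb : b ∉ F)
    {u v : G.V} (h : (G.deleteEdges F).Reachable u v) :
    (G.deleteEdges (insert b F)).Reachable u v ∨
      (((G.deleteEdges (insert b F)).Reachable u (G.fst b) ∨
        (G.deleteEdges (insert b F)).Reachable u (G.snd b)) ∧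
       ((G.deleteEdges (insert b F)).Reachable (G.fst b) v ∨
        (G.deleteEdges (insert b F)).Reachable (G.snd b) v)) := by
  have hAdj : ((G.deleteEdges F).deleteEdges {(⟨b, hb⟩ : (G.deleteEdges F).E)}).Adj
      = (G.deleteEdges (insert b F)).Adj := by
    erw [adj_dd, Set.image_singleton, Set.union_singleton]
  have tr : ∀ {x y : G.V},
      ((G.deleteEdges F).deleteEdges {(⟨b, hb⟩ : (G.deleteEdges F).E)}).Reachable x y →
        (G.deleteEdges (insert b F)).Reachable x y := by
    intro x y h'
    unfold Multigraph.Reachable at h' ⊢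
    rwa [hAdj] at h'
  rcases reach_delete_or (G.deleteEdges F) ⟨b, hb⟩ h with h' | ⟨h1, h2⟩
  · exact Or.inl (tr h')
  · exact Or.inr ⟨h1.imp tr tr, h2.imp tr tr⟩

theorem spade (G : Multigraph) {g b : G.E} (hg : ¬ G.IsSeparating g)
    (hb : G.IsSeparating b) (hgb : g ≠ b) :
    (G.deleteEdges (insert b {g})).Reachable (G.fst g) (G.snd g) := by
  have h1 : (G.deleteEdges {g}).Reachable (G.fst g) (G.snd g) := not_not.mp hg
  have hbg : b ∉ ({g} : Set G.E) := by
    rw [Set.mem_singleton_iff]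
    exact fun h => hgb h.symm
  have mono' : ∀ {x y : G.V}, (G.deleteEdges (insert b {g})).Reachable x y →
      (G.deleteEdges {b}).Reachable x y :=
    fun h => reach_mono G (Set.singleton_subset_iff.mpr (Set.mem_insert _ _)) h
  have hedge : (G.deleteEdges {b}).Reachable (G.fst g) (G.snd g) := by
    refine Relation.ReflTransGen.single (edge_adj_delete G ?_)
    rw [Set.mem_singleton_iff]
    exact hgb
  rcases reach_delete_or' G {g} b hbg h1 with h' | ⟨ha, hb2⟩
  · exact h'
  · rcases ha with ha | ha <;> rcases hb2 with hb2 | hb2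
    · exact ha.trans hb2
    · exact absurd (((reach_symm (mono' ha)).trans hedge).trans
        (reach_symm (mono' hb2))) hb
    · exact absurd (((mono' hb2).trans (reach_symm hedge)).trans (mono' ha)) hb
    · exact ha.trans hb2

/-- Endpoints of a non-separating edge are joined across bridges. -/
theorem qb (G : Multigraph) (hconn : G.Connected) {e f : G.E}
    (he : ¬ G.IsSeparating e) (hf : ¬ G.IsSeparating f)
    (hdisf : ¬ (G.deleteEdges {e, f}).Preconnected) {b : G.E}
    (hb : G.IsSeparating b) :
    (G.deleteEdges {b}).Reachable (G.fst e) (G.fst f) := by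
  by_contra hcross
  have hef : e ≠ f := by
    rintro rfl
    exact hcross Relation.ReflTransGen.refl
  have heb : e ≠ b := fun h => he (h ▸ hb)
  have hfb : f ≠ b := fun h => hf (h ▸ hb)
  have mono1 : ∀ {x y : G.V},
      (G.deleteEdges (insert f (insert b {e}))).Reachable x y →
        (G.deleteEdges {b}).Reachable x y :=
    fun h => reach_mono G (Set.singleton_subset_iff.mpr
      (Set.mem_insert_of_mem _ (Set.mem_insert _ _))) h
  have mono2 : ∀ {x y : G.V},
      (G.deleteEdges (insert e (insert b {f}))).Reachable x y →
        (G.deleteEdges {b}).Reachable x y :=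
    fun h => reach_mono G (Set.singleton_subset_iff.mpr
      (Set.mem_insert_of_mem _ (Set.mem_insert _ _))) h
  have hedgef : (G.deleteEdges {b}).Reachable (G.fst f) (G.snd f) := by
    refine Relation.ReflTransGen.single (edge_adj_delete G ?_)
    rw [Set.mem_singleton_iff]
    exact hfb
  have hedgee : (G.deleteEdges {b}).Reachable (G.fst e) (G.snd e) := by
    refine Relation.ReflTransGen.single (edge_adj_delete G ?_)
    rw [Set.mem_singleton_iff]
    exact heb
  -- strengthen the spade for e, avoiding f
  have hfmem : f ∉ insert b ({e} : Set G.E) := by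
    intro hm
    rcases hm with hm | hm
    · exact hfb hm
    · rw [Set.mem_singleton_iff] at hm
      exact hef hm.symm
  have reachE : (G.deleteEdges (insert f (insert b {e}))).Reachable (G.fst e) (G.snd e) := by
    rcases reach_delete_or' G (insert b {e}) f hfmem (spade G he hb heb) with h' | ⟨hA, -⟩
    · exact h'
    · exfalso
      rcases hA with hA | hA
      · exact hcross (mono1 hA)
      · exact hcross ((mono1 hA).trans (reach_symm hedgef))
  have hemem : e ∉ insert b ({f} : Set G.E) := by
    intro hm
    rcases hm with hm | hm
    · exact heb hm
    · rw [Set.mem_singleton_iff] at hm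
      exact hef hm
  have reachF : (G.deleteEdges (insert e (insert b {f}))).Reachable (G.fst f) (G.snd f) := by
    rcases reach_delete_or' G (insert b {f}) e hemem (spade G hf hb hfb) with h' | ⟨hA, -⟩
    · exact h'
    · exfalso
      rcases hA with hA | hA
      · exact hcross (reach_symm (mono2 hA))
      · exact hcross (reach_symm ((mono2 hA).trans (reach_symm hedgee)))
  -- conclude G ∖ {e,f} is preconnected, contradiction
  apply hdisf
  apply precon_delete G hconn.2
  intro g hg
  rcases hg with rfl | hg
  · -- g = e
    refine reach_mono G ?_ reachE
    intro x hx
    rcases hx with rfl | hx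
    · exact Set.mem_insert_of_mem _ (Set.mem_insert_of_mem _ (Set.mem_singleton _))
    · rw [Set.mem_singleton_iff] at hx
      subst hx
      exact Set.mem_insert _ _
  · rw [Set.mem_singleton_iff] at hg
    subst hg
    refine reach_mono G ?_ reachF
    intro x hx
    rcases hx with rfl | hx
    · exact Set.mem_insert _ _
    · rw [Set.mem_singleton_iff] at hx
      subst hx
      exact Set.mem_insert_of_mem _ (Set.mem_insert_of_mem _ (Set.mem_singleton _))

theorem reachH_pair (G : Multigraph) {g : G.E} (hg : ¬ G.IsSeparating g) :
    (G.deleteEdges G.sepEdges).Reachable (G.fst g) (G.snd g) := by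
  have h := reach_delete_union G (T := G.sepEdges) (F := {g}) (fun b hb => hb)
    (not_not.mp hg) (by
      intro b hb
      refine Relation.ReflTransGen.single (edge_adj_delete G ?_)
      rw [Set.mem_singleton_iff]
      exact fun hm => hg (hm ▸ hb))
  exact reach_mono G Set.subset_union_right h

theorem reachH_cross (G : Multigraph) (hconn : G.Connected) {e f : G.E}
    (he : ¬ G.IsSeparating e) (hf : ¬ G.IsSeparating f)
    (hdisf : ¬ (G.deleteEdges {e, f}).Preconnected) :
    (G.deleteEdges G.sepEdges).Reachable (G.fst e) (G.fst f) := by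
  have h0 : (G.deleteEdges (∅ : Set G.E)).Reachable (G.fst e) (G.fst f) := by
    unfold Multigraph.Reachable
    rw [adj_deleteEdges_empty]
    exact hconn.2 _ _
  have h := reach_delete_union G (T := G.sepEdges) (F := ∅) (fun b hb => hb) h0
    (fun b hb => qb G hconn he hf hdisf hb)
  rwa [Set.empty_union] at h

end Aux8
section Aux9

/-- The candidate C1-set. -/
private def Sset (G : Multigraph) (e : G.E) : Set G.E :=
  {f | ¬ G.IsSeparating f ∧ (f = e ∨ ¬ (G.deleteEdges {e, f}).Preconnected)}

private def Sep1 (G : Multigraph) (e : G.E) : Set G.E :=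
  {g | ∃ h : g ∉ ({e} : Set G.E), (G.deleteEdges {e}).IsSeparating ⟨g, h⟩}

theorem sc2 (G : Multigraph) (hconn : G.Connected) {e f : G.E}
    (he : ¬ G.IsSeparating e) (hdisf : ¬ (G.deleteEdges {e, f}).Preconnected)
    (hfm : f ∉ ({e} : Set G.E)) :
    (G.deleteEdges {e}).IsSeparating ⟨f, hfm⟩ := by
  intro hre
  have hAdj : ((G.deleteEdges {e}).deleteEdges
        {(⟨f, hfm⟩ : (G.deleteEdges {e}).E)}).Adj
      = (G.deleteEdges (insert f {e})).Adj := by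
    erw [adj_dd, Set.image_singleton, Set.union_singleton]
  have hre' : (G.deleteEdges (insert f {e})).Reachable (G.fst f) (G.snd f) := by
    unfold Multigraph.Reachable at hre ⊢
    erw [hAdj] at hre; exact hre
  have h1 : (G.deleteEdges {e}).Reachable (G.fst e) (G.snd e) := not_not.mp he
  have heE : (G.deleteEdges (insert f {e})).Reachable (G.fst e) (G.snd e) := by
    rcases reach_delete_or' G {e} f hfm h1 with h' | ⟨hA, hB⟩
    · exact h'
    · rcases hA with hA | hA <;> rcases hB with hB | hB
      · exact hA.trans hB
      · exact hA.trans (hre'.trans hB)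
      · exact hA.trans ((reach_symm hre').trans hB)
      · exact hA.trans hB
  apply hdisf
  rw [show ({e, f} : Set G.E) = insert f {e} from Set.pair_comm e f]
  apply precon_delete G hconn.2
  intro g hg
  rcases hg with rfl | hg
  · exact hre'
  · rw [Set.mem_singleton_iff] at hg
    subst hg
    exact heE

theorem back_sc (G : Multigraph) (hconn : G.Connected) {e : G.E}
    (he : ¬ G.IsSeparating e) :
    G.sepEdges ∪ Sset G e = insert e (Sep1 G e) := by
  ext g
  constructor
  · intro hg
    rcases hg with hg | hg
    · have hgm : g ∉ ({e} : Set G.E) := by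
        rw [Set.mem_singleton_iff]
        exact fun h => he (h ▸ hg)
      exact Set.mem_insert_of_mem _ ⟨hgm, sep_mono G hg hgm⟩
    · obtain ⟨hgns, hor⟩ := hg
      rcases hor with rfl | hdisg
      · exact Set.mem_insert _ _
      · by_cases hge : g = e
        · subst hge
          exact Set.mem_insert _ _
        · have hgm : g ∉ ({e} : Set G.E) := by
            rw [Set.mem_singleton_iff]
            exact hge
          exact Set.mem_insert_of_mem _ ⟨hgm, sc2 G hconn he hdisg hgm⟩
  · intro hg
    rcases hg with rfl | hg
    · exact Or.inr ⟨he, Or.inl rfl⟩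
    · obtain ⟨hgm, hsepg⟩ := hg
      by_cases hgsep : G.IsSeparating g
      · exact Or.inl hgsep
      · refine Or.inr ⟨hgsep, Or.inr ?_⟩
        intro hpre'
        apply hsepg
        have h0 := hpre' (G.fst g) (G.snd g)
        rw [show ({e, g} : Set G.E) = insert g {e} from Set.pair_comm e g] at h0
        have hAdj : ((G.deleteEdges {e}).deleteEdges
              {(⟨g, hgm⟩ : (G.deleteEdges {e}).E)}).Adj
            = (G.deleteEdges (insert g {e})).Adj := by
          erw [adj_dd, Set.image_singleton, Set.union_singleton]
        unfold Multigraph.Reachable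
        erw [hAdj]
        exact h0

end Aux9
section Aux10

theorem reach_core_contract_del (X : Multigraph) (A : Set X.E) (D : Set X.E) {u v : X.V}
    (h : (X.deleteEdges D).Reachable u v)
    (hu : nonIso (X.contractCompl A) (Quot.mk (X.deleteEdges A).Adj u)) :
    Quot.mk (X.deleteEdges A).Adj v = Quot.mk (X.deleteEdges A).Adj u ∨
    ∃ hv : nonIso (X.contractCompl A) (Quot.mk (X.deleteEdges A).Adj v),
      (((X.contractCompl A).core).deleteEdges
        {g : ((X.contractCompl A).core).E | g.1.1 ∈ D}).Reachable ⟨_, hu⟩ ⟨_, hv⟩ := by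
  have h1 := reach_contract X A D h
  rcases reach_core_delete _ _ hu h1 with heq | ⟨hv, hr⟩
  · exact Or.inl heq
  · exact Or.inr ⟨hv, hr⟩

theorem reach_core_contract (X : Multigraph) (A : Set X.E) {u v : X.V}
    (h : X.Reachable u v)
    (hu : nonIso (X.contractCompl A) (Quot.mk (X.deleteEdges A).Adj u)) :
    Quot.mk (X.deleteEdges A).Adj v = Quot.mk (X.deleteEdges A).Adj u ∨
    ∃ hv : nonIso (X.contractCompl A) (Quot.mk (X.deleteEdges A).Adj v),
      ((X.contractCompl A).core).Reachable ⟨_, hu⟩ ⟨_, hv⟩ := by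
  have h0 : (X.deleteEdges (∅ : Set X.E)).Reachable u v := by
    unfold Multigraph.Reachable
    rw [adj_deleteEdges_empty]
    exact h
  rcases reach_core_contract_del X A ∅ h0 hu with heq | ⟨hv, hr⟩
  · exact Or.inl heq
  · refine Or.inr ⟨hv, ?_⟩
    have hset : {g : ((X.contractCompl A).core).E | g.1.1 ∈ (∅ : Set X.E)}
        = (∅ : Set ((X.contractCompl A).core).E) := by
      ext g; simp
    rw [hset] at hr
    unfold Multigraph.Reachable at hr ⊢
    rwa [adj_deleteEdges_empty] at hr

private theorem back_conn (G : Multigraph) (hconn : G.Connected) (e : G.E)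
    (he : ¬ G.IsSeparating e) :
    (((G.deleteEdges G.sepEdges).contractCompl
      {f : (G.deleteEdges G.sepEdges).E | f.1 ∈ Sset G e}).core).Connected := by
  have heS : e ∈ Sset G e := ⟨he, Or.inl rfl⟩
  have hu0 : nonIso ((G.deleteEdges G.sepEdges).contractCompl
      {f : (G.deleteEdges G.sepEdges).E | f.1 ∈ Sset G e})
      (Quot.mk ((G.deleteEdges G.sepEdges).deleteEdges
        {f : (G.deleteEdges G.sepEdges).E | f.1 ∈ Sset G e}).Adj (G.fst e)) :=
    ⟨⟨⟨e, he⟩, heS⟩, Set.mem_univ _, Or.inl rfl⟩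
  have hub : ∀ f, f ∈ Sset G e →
      (G.deleteEdges G.sepEdges).Reachable (G.fst e) (G.fst f)
      ∧ (G.deleteEdges G.sepEdges).Reachable (G.fst e) (G.snd f) := by
    intro f hf
    obtain ⟨hfns, hor⟩ := hf
    have hpair := reachH_pair G hfns
    rcases hor with rfl | hdisf
    · exact ⟨Relation.ReflTransGen.refl, hpair⟩
    · have hcross := reachH_cross G hconn he hfns hdisf
      exact ⟨hcross, hcross.trans hpair⟩
  have key : ∀ z, (((G.deleteEdges G.sepEdges).contractCompl
      {f : (G.deleteEdges G.sepEdges).E | f.1 ∈ Sset G e}).core).Reachable ⟨_, hu0⟩ z := by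
    intro z
    obtain ⟨z1, hz⟩ := z
    have hz2 := hz
    obtain ⟨s, -, hs⟩ := hz2
    rcases hs with hs | hs <;> subst hs
    · rcases reach_core_contract (G.deleteEdges G.sepEdges)
        {f : (G.deleteEdges G.sepEdges).E | f.1 ∈ Sset G e}
        (hub s.1.1 s.2).1 hu0 with heq | ⟨hv, hr⟩
      · rw [show (⟨_, hz⟩ :
            (((G.deleteEdges G.sepEdges).contractCompl
              {f : (G.deleteEdges G.sepEdges).E | f.1 ∈ Sset G e}).core).V)
            = ⟨_, hu0⟩ from Subtype.ext heq]
        exact Relation.ReflTransGen.refl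
      · exact hr
    · rcases reach_core_contract (G.deleteEdges G.sepEdges)
        {f : (G.deleteEdges G.sepEdges).E | f.1 ∈ Sset G e}
        (hub s.1.1 s.2).2 hu0 with heq | ⟨hv, hr⟩
      · rw [show (⟨_, hz⟩ :
            (((G.deleteEdges G.sepEdges).contractCompl
              {f : (G.deleteEdges G.sepEdges).E | f.1 ∈ Sset G e}).core).V)
            = ⟨_, hu0⟩ from Subtype.ext heq]
        exact Relation.ReflTransGen.refl
      · exact hr
  exact ⟨⟨⟨_, hu0⟩⟩, fun z z' => (reach_symm (key z)).trans (key z')⟩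

private theorem back_sepfree (G : Multigraph) (e : G.E) :
    (((G.deleteEdges G.sepEdges).contractCompl
      {f : (G.deleteEdges G.sepEdges).E | f.1 ∈ Sset G e}).core).sepEdges = ∅ := by
  rw [Set.eq_empty_iff_forall_notMem]
  intro sC hsC
  apply hsC
  have hsS : sC.1.1.1 ∈ Sset G e := sC.1.2
  have hsns : ¬ G.IsSeparating sC.1.1.1 := hsS.1
  have hbase : (G.deleteEdges (({sC.1.1.1} : Set G.E) ∪ G.sepEdges)).Reachable
      (G.fst sC.1.1.1) (G.snd sC.1.1.1) :=
    reach_delete_union G (fun b hb => hb) (not_not.mp hsns) (by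
      intro b hb
      refine Relation.ReflTransGen.single (edge_adj_delete G ?_)
      rw [Set.mem_singleton_iff]
      exact fun hm => hsns (hm ▸ hb))
  have himgs : Subtype.val ''
      {g : (G.deleteEdges G.sepEdges).E | g.1 ∈ ({sC.1.1.1} : Set G.E)}
      = ({sC.1.1.1} : Set G.E) := by
    ext g
    constructor
    · rintro ⟨f, hf, rfl⟩
      exact hf
    · intro hg
      rw [Set.mem_singleton_iff] at hg
      subst hg
      exact ⟨sC.1.1, rfl, rfl⟩
  have hAdjs : ((G.deleteEdges G.sepEdges).deleteEdges
        {g : (G.deleteEdges G.sepEdges).E | g.1 ∈ ({sC.1.1.1} : Set G.E)}).Adj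
      = (G.deleteEdges (({sC.1.1.1} : Set G.E) ∪ G.sepEdges)).Adj := by
    erw [adj_dd, himgs, Set.union_comm]
  have h2 : ((G.deleteEdges G.sepEdges).deleteEdges
      {g : (G.deleteEdges G.sepEdges).E | g.1 ∈ ({sC.1.1.1} : Set G.E)}).Reachable
      (G.fst sC.1.1.1) (G.snd sC.1.1.1) := by
    unfold Multigraph.Reachable
    rw [hAdjs]
    exact hbase
  have hu1 : nonIso ((G.deleteEdges G.sepEdges).contractCompl
      {f : (G.deleteEdges G.sepEdges).E | f.1 ∈ Sset G e})
      (Quot.mk ((G.deleteEdges G.sepEdges).deleteEdges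
        {f : (G.deleteEdges G.sepEdges).E | f.1 ∈ Sset G e}).Adj (G.fst sC.1.1.1)) :=
    ⟨sC.1, Set.mem_univ _, Or.inl rfl⟩
  rcases reach_core_contract_del (G.deleteEdges G.sepEdges)
    {f : (G.deleteEdges G.sepEdges).E | f.1 ∈ Sset G e}
    {g : (G.deleteEdges G.sepEdges).E | g.1 ∈ ({sC.1.1.1} : Set G.E)}
    h2 hu1 with heq | ⟨hv, hr⟩
  · rw [show (((G.deleteEdges G.sepEdges).contractCompl
        {f : (G.deleteEdges G.sepEdges).E | f.1 ∈ Sset G e}).core).snd sC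
        = (((G.deleteEdges G.sepEdges).contractCompl
        {f : (G.deleteEdges G.sepEdges).E | f.1 ∈ Sset G e}).core).fst sC
      from Subtype.ext heq]
    exact Relation.ReflTransGen.refl
  · have hset2 : {g : (((G.deleteEdges G.sepEdges).contractCompl
        {f : (G.deleteEdges G.sepEdges).E | f.1 ∈ Sset G e}).core).E |
        g.1.1 ∈ {g : (G.deleteEdges G.sepEdges).E | g.1 ∈ ({sC.1.1.1} : Set G.E)}}
        = {sC} := by
      ext g
      constructor
      · intro hg
        exact Subtype.ext (Subtype.ext (Subtype.ext hg))
      · intro hg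
        rw [Set.mem_singleton_iff] at hg
        subst hg
        rfl
    rw [hset2] at hr
    exact hr

end Aux10
section Aux11

private theorem back_b1 (G : Multigraph) (hconn : G.Connected) (e : G.E)
    (he : ¬ G.IsSeparating e) :
    (((G.deleteEdges G.sepEdges).contractCompl
      {f : (G.deleteEdges G.sepEdges).E | f.1 ∈ Sset G e}).core).b1 = 1 := by
  classical
  have hGc : Nat.card (Quot G.Adj) = 1 := numComponents_eq_one G hconn
  have hpre_e : (G.deleteEdges {e}).Preconnected :=
    precon_delete G hconn.2 (by
      intro g hg
      rw [Set.mem_singleton_iff] at hg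
      subst hg
      exact not_not.mp he)
  have hGec : Nat.card (Quot (G.deleteEdges {e}).Adj) = 1 :=
    numComponents_eq_one _ ⟨hconn.1, hpre_e⟩
  have himg1 : Subtype.val '' {f : (G.deleteEdges G.sepEdges).E | f.1 ∈ Sset G e}
      = Sset G e := by
    ext g
    constructor
    · rintro ⟨f, hf, rfl⟩
      exact hf
    · intro hg
      exact ⟨⟨g, hg.1⟩, hg, rfl⟩
  have himg2 : Subtype.val '' ((G.deleteEdges {e}).sepEdges) = Sep1 G e := by
    ext g
    constructor
    · rintro ⟨b, hb, rfl⟩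
      exact ⟨b.2, hb⟩
    · rintro ⟨hgm, hsep⟩
      exact ⟨⟨g, hgm⟩, hsep, rfl⟩
  have hSC := back_sc G hconn he
  have hAdjMain : ((G.deleteEdges G.sepEdges).deleteEdges
        {f : (G.deleteEdges G.sepEdges).E | f.1 ∈ Sset G e}).Adj
      = ((G.deleteEdges {e}).deleteEdges ((G.deleteEdges {e}).sepEdges)).Adj := by
    erw [adj_dd, adj_dd, himg1, himg2, hSC, Set.singleton_union]
  have ht' : (Sep1 G e).ncard = ((G.deleteEdges {e}).sepEdges).ncard := by
    rw [← himg2]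
    exact Set.ncard_image_of_injective _ Subtype.val_injective
  have hcard1 : G.sepEdges.ncard + (Sset G e).ncard = 1 + (Sep1 G e).ncard := by
    have hd : Disjoint G.sepEdges (Sset G e) := by
      rw [Set.disjoint_left]
      intro a ha haS
      exact haS.1 ha
    have henotin : e ∉ Sep1 G e := by
      rintro ⟨hm, -⟩
      exact hm rfl
    rw [← Set.ncard_union_eq hd (Set.toFinite _) (Set.toFinite _), hSC,
      Set.ncard_insert_of_notMem henotin (Set.toFinite _)]
    omega
  have hcH : Nat.card (Quot (G.deleteEdges G.sepEdges).Adj) = 1 + G.sepEdges.ncard := by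
    rw [card_quot_delete_sepset G (T := G.sepEdges) (fun b hb => hb), hGc]
  have hcHS : Nat.card (Quot ((G.deleteEdges G.sepEdges).deleteEdges
      {f : (G.deleteEdges G.sepEdges).E | f.1 ∈ Sset G e}).Adj)
      = 1 + (Sep1 G e).ncard := by
    erw [hAdjMain, card_quot_delete_sepset (G.deleteEdges {e}) (T := (G.deleteEdges {e}).sepEdges) (fun b hb => hb), hGec, ht']
  have hcK := card_quot_contract (G.deleteEdges G.sepEdges)
    {f : (G.deleteEdges G.sepEdges).E | f.1 ∈ Sset G e}
  have hq := card_core_quot ((G.deleteEdges G.sepEdges).contractCompl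
    {f : (G.deleteEdges G.sepEdges).E | f.1 ∈ Sset G e})
  have hvv := card_core_V ((G.deleteEdges G.sepEdges).contractCompl
    {f : (G.deleteEdges G.sepEdges).E | f.1 ∈ Sset G e})
  have hCc : (((G.deleteEdges G.sepEdges).contractCompl
      {f : (G.deleteEdges G.sepEdges).E | f.1 ∈ Sset G e}).core).numComponents = 1 :=
    numComponents_eq_one _ (back_conn G hconn e he)
  have hKV : Nat.card ((G.deleteEdges G.sepEdges).contractCompl
      {f : (G.deleteEdges G.sepEdges).E | f.1 ∈ Sset G e}).V = 1 + (Sep1 G e).ncard := hcHS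
  have hKE : Nat.card ((G.deleteEdges G.sepEdges).contractCompl
      {f : (G.deleteEdges G.sepEdges).E | f.1 ∈ Sset G e}).E = (Sset G e).ncard := by
    have equiv1 : {f : (G.deleteEdges G.sepEdges).E // f.1 ∈ Sset G e}
        ≃ {g : G.E // g ∈ Sset G e} :=
      { toFun := fun s => ⟨s.1.1, s.2⟩
        invFun := fun g => ⟨⟨g.1, fun hT => g.2.1 hT⟩, g.2⟩
        left_inv := fun s => rfl
        right_inv := fun g => rfl }
    exact (Nat.card_congr equiv1).trans (Nat.card_coe_set_eq (Sset G e))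
  have hCE : Nat.card (((G.deleteEdges G.sepEdges).contractCompl
      {f : (G.deleteEdges G.sepEdges).E | f.1 ∈ Sset G e}).core).E = (Sset G e).ncard :=
    (Nat.card_congr (Equiv.Set.univ _)).trans hKE
  have h1 : Nat.card (Quot (((G.deleteEdges G.sepEdges).contractCompl
      {f : (G.deleteEdges G.sepEdges).E | f.1 ∈ Sset G e}).core).Adj) = 1 := hCc
  have hCV : Nat.card (((G.deleteEdges G.sepEdges).contractCompl
      {f : (G.deleteEdges G.sepEdges).E | f.1 ∈ Sset G e}).core).V = (Sset G e).ncard := by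
    omega
  unfold Multigraph.b1
  rw [hCc, hCE, hCV]
  push_cast
  ring

private theorem back_delsep (G : Multigraph) (hconn : G.Connected) (e : G.E)
    (he : ¬ G.IsSeparating e) :
    ((G.deleteEdges G.sepEdges).deleteEdges
      {f : (G.deleteEdges G.sepEdges).E | f.1 ∈ Sset G e}).sepEdges = ∅ := by
  classical
  have hSC := back_sc G hconn he
  have himg1 : Subtype.val '' {f : (G.deleteEdges G.sepEdges).E | f.1 ∈ Sset G e}
      = Sset G e := by
    ext g
    constructor
    · rintro ⟨f, hf, rfl⟩
      exact hf
    · intro hg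
      exact ⟨⟨g, hg.1⟩, hg, rfl⟩
  have himg2 : Subtype.val '' ((G.deleteEdges {e}).sepEdges) = Sep1 G e := by
    ext g
    constructor
    · rintro ⟨b, hb, rfl⟩
      exact ⟨b.2, hb⟩
    · rintro ⟨hgm, hsep⟩
      exact ⟨⟨g, hgm⟩, hsep, rfl⟩
  rw [Set.eq_empty_iff_forall_notMem]
  intro gE hgE
  apply hgE
  have hg1 : gE.1.1 ∉ insert e (Sep1 G e) := by
    rw [← hSC]
    intro hm
    rcases hm with hm | hm
    · exact gE.1.2 hm
    · exact gE.2 hm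
  have hgne : gE.1.1 ∉ ({e} : Set G.E) := by
    rw [Set.mem_singleton_iff]
    intro h
    apply hg1
    rw [h]
    exact Set.mem_insert _ _
  have hgnsep1 : ¬ (G.deleteEdges {e}).IsSeparating ⟨gE.1.1, hgne⟩ := by
    intro hsep'
    exact hg1 (Set.mem_insert_of_mem _ ⟨hgne, hsep'⟩)
  have hbase := reach_delete_union (G.deleteEdges {e})
    (T := (G.deleteEdges {e}).sepEdges)
    (F := {(⟨gE.1.1, hgne⟩ : (G.deleteEdges {e}).E)}) (fun b hb => hb)
    (not_not.mp hgnsep1) (by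
      intro b hb
      refine Relation.ReflTransGen.single (edge_adj_delete _ ?_)
      erw [Set.mem_singleton_iff]
      exact fun hm => hgnsep1 (hm ▸ hb))
  have hA1 : ((G.deleteEdges {e}).deleteEdges
      (({(⟨gE.1.1, hgne⟩ : (G.deleteEdges {e}).E)} : Set (G.deleteEdges {e}).E)
        ∪ (G.deleteEdges {e}).sepEdges)).Adj
      = (G.deleteEdges (({e} : Set G.E)
        ∪ (({gE.1.1} : Set G.E) ∪ Sep1 G e))).Adj := by
    erw [adj_dd, Set.image_union, Set.image_singleton, himg2]
  have hA2 : (((G.deleteEdges G.sepEdges).deleteEdges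
        {f : (G.deleteEdges G.sepEdges).E | f.1 ∈ Sset G e}).deleteEdges
        ({gE} : Set ((G.deleteEdges G.sepEdges).deleteEdges
          {f : (G.deleteEdges G.sepEdges).E | f.1 ∈ Sset G e}).E)).Adj
      = (G.deleteEdges (G.sepEdges ∪ (Sset G e ∪ ({gE.1.1} : Set G.E)))).Adj := by
    erw [adj_dd, adj_dd, Set.image_singleton, Set.image_union, himg1, Set.image_singleton]
  have hseteq : G.sepEdges ∪ (Sset G e ∪ ({gE.1.1} : Set G.E))
      = ({e} : Set G.E) ∪ (({gE.1.1} : Set G.E) ∪ Sep1 G e) := by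
    rw [← Set.union_assoc, hSC, Set.insert_eq]
    ext x
    simp only [Set.mem_union, Set.mem_singleton_iff]
    tauto
  unfold Multigraph.Reachable
  rw [hA2, hseteq, ← hA1]
  exact hbase

private theorem backward_dir (G : Multigraph) (hconn : G.Connected) (e e' : G.E)
    (he : ¬ G.IsSeparating e) (he' : ¬ G.IsSeparating e')
    (hdis : ¬ (G.deleteEdges {e, e'}).Preconnected) :
    ∃ S : Set G.E, G.IsC1 S ∧ e ∈ S ∧ e' ∈ S :=
  ⟨Sset G e, ⟨fun f hf => hf.1,
    ⟨back_conn G hconn e he, back_sepfree G e, back_b1 G hconn e he⟩,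
    back_delsep G hconn e he⟩, ⟨he, Or.inl rfl⟩, ⟨he', Or.inr hdis⟩⟩

end Aux11

/-- In a connected graph, two distinct non-separating edges belong to
the same C1-set iff `Γ∖{e,e'}` is disconnected (i.e. `(e,e')` is a separating pair). -/
theorem mem_same_isC1_iff_not_preconnected_deleteEdges_pair (G : Multigraph)
    (hconn : G.Connected) (e e' : G.E) (hne : e ≠ e')
    (he : ¬ G.IsSeparating e) (he' : ¬ G.IsSeparating e') :
    (∃ S : Set G.E, G.IsC1 S ∧ e ∈ S ∧ e' ∈ S) ↔
      ¬ (G.deleteEdges {e, e'}).Preconnected := by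
  constructor
  · rintro ⟨S, hS, heS, he'S⟩
    exact forward_dir G hconn e e' hne he he' S hS heS he'S
  · intro hdis
    exact backward_dir G hconn e e' he he' hdis
end
end

section
/- A finite graph Γ is 3-edge connected if and only if Γ is connected and every C1-set of Γ is a singleton {e} for some edge e, with every edge belonging to exactly one C1-set; equivalently, the map e ↦ {e} is a bijection from E(Γ) to the set of C1-sets of Γ. -/
/-! Basic theory of finite multigraphs (loops and multiple edges allowed),
following Caporaso–Viviani, "Torelli theorem for graphs and tropical curves". -/

noncomputable section

open scoped Classical

namespace Multigraph

variable {G : Multigraph}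

lemma adj_symm : Symmetric G.Adj := fun _ _ ⟨e, h⟩ => ⟨e, h.symm⟩

lemma reach_symm {v w : G.V} (h : G.Reachable v w) : G.Reachable w v :=
  (@Relation.ReflTransGen.stdSymm _ _ ⟨fun _ _ h => adj_symm h⟩).symm _ _ h

lemma rtg_congr {α : Type} {r s : α → α → Prop} (h : r = s) {v w : α} :
    Relation.ReflTransGen r v w ↔ Relation.ReflTransGen s v w := by rw [h]

lemma quot_card_congr {α : Type} {r s : α → α → Prop} (h : r = s) :
    Nat.card (Quot r) = Nat.card (Quot s) := by rw [h]

lemma adj_del_empty : (G.deleteEdges ∅).Adj = G.Adj := by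
  funext v w; apply propext
  constructor
  · rintro ⟨e, h⟩; exact ⟨e.1, h⟩
  · rintro ⟨e, h⟩; exact ⟨⟨e, Set.notMem_empty e⟩, h⟩

lemma adj_del_del (A : Set G.E) (B : Set (G.deleteEdges A).E) :
    ((G.deleteEdges A).deleteEdges B).Adj
      = (G.deleteEdges (A ∪ {e : G.E | ∃ h : e ∉ A, (⟨e, h⟩ : (G.deleteEdges A).E) ∈ B})).Adj := by
  funext v w; apply propext
  constructor
  · rintro ⟨⟨⟨e, hA⟩, hB⟩, h⟩
    refine ⟨⟨e, ?_⟩, h⟩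
    rintro (h1 | ⟨h2, hm⟩)
    · exact hA h1
    · exact hB hm
  · rintro ⟨⟨e, hU⟩, h⟩
    exact ⟨⟨⟨e, fun h1 => hU (Or.inl h1)⟩, fun hm => hU (Or.inr ⟨_, hm⟩)⟩, h⟩

lemma quot_mk_eq_of_reachable {v w : G.V} (h : G.Reachable v w) :
    Quot.mk G.Adj v = Quot.mk G.Adj w := by
  induction h with
  | refl => rfl
  | tail _ hadj ih => exact ih.trans (Quot.sound hadj)

lemma card_eq_one_of {α : Type} (h1 : Subsingleton α) (h2 : Nonempty α) : Nat.card α = 1 :=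
  Nat.card_eq_one_iff_unique.mpr ⟨h1, h2⟩

lemma numComponents_eq_one (h : G.Connected) : G.numComponents = 1 := by
  refine card_eq_one_of ⟨fun a b => ?_⟩ (Nonempty.map (Quot.mk _) h.1)
  induction a using Quot.ind with | _ v => ?_
  induction b using Quot.ind with | _ w => ?_
  exact quot_mk_eq_of_reachable (h.2 v w)

end Multigraph

namespace Multigraph

variable {G : Multigraph}

lemma nc_del_single (G : Multigraph) (e : G.E) :
    (G.deleteEdges {e}).numComponents ≤ G.numComponents + 1 := by
  classical
  let Q' := Quot (G.deleteEdges ({e} : Set G.E)).Adj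
  let A : Q' := Quot.mk _ (G.fst e)
  let B : Q' := Quot.mk _ (G.snd e)
  let s : Q' → Q' → Prop := fun x y => x = A ∧ y = B
  have hwd : ∀ v w, G.Adj v w →
      Quot.mk s (Quot.mk (G.deleteEdges ({e} : Set G.E)).Adj v)
        = Quot.mk s (Quot.mk (G.deleteEdges ({e} : Set G.E)).Adj w) := by
    rintro v w ⟨f, hf⟩
    by_cases hfe : f = e
    · subst hfe
      have hAB : Quot.mk s A = Quot.mk s B := Quot.sound ⟨rfl, rfl⟩
      rcases hf with ⟨h1, h2⟩ | ⟨h1, h2⟩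
      · rw [← h1, ← h2]; exact hAB
      · rw [← h1, ← h2]; exact hAB.symm
    · have hadj : (G.deleteEdges ({e} : Set G.E)).Adj v w := ⟨⟨f, by simp [hfe]⟩, hf⟩
      exact congrArg (Quot.mk s) (Quot.sound hadj)
  have hexact : ∀ x y : Q', Quot.mk s x = Quot.mk s y →
      x = y ∨ ((x = A ∨ x = B) ∧ (y = A ∨ y = B)) := by
    intro x y h
    have h' := Quot.eqvGen_exact h
    clear h
    induction h' with
    | rel a b hab => exact Or.inr ⟨Or.inl hab.1, Or.inr hab.2⟩
    | refl => exact Or.inl rfl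
    | symm a b _ ih => tauto
    | trans a b c _ _ ih1 ih2 =>
      rcases ih1 with rfl | ⟨h1, h2⟩
      · exact ih2
      · rcases ih2 with rfl | ⟨h3, h4⟩
        · exact Or.inr ⟨h1, h2⟩
        · exact Or.inr ⟨h1, h4⟩
  let f : Q' → Quot s ⊕ Unit := fun x => if x = B then Sum.inr () else Sum.inl (Quot.mk s x)
  have hfinj : Function.Injective f := by
    intro x y hxy
    by_cases hx : x = B <;> by_cases hy : y = B <;> simp only [f, hx, hy, if_pos, if_neg,
      if_true, if_false, reduceIte] at hxy
    · rw [hx, hy]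
    · exact absurd hxy (by simp)
    · exact absurd hxy (by simp)
    · simp only [Sum.inl.injEq] at hxy
      rcases hexact x y hxy with h | ⟨h1 | h1, h2 | h2⟩ <;> first
        | assumption | (exact absurd  h1 hx) | (exact absurd h2 hy) | (rw [h1, h2])
  have hχ : Function.Surjective (Quot.lift
      (fun v => Quot.mk s (Quot.mk (G.deleteEdges ({e} : Set G.E)).Adj v)) hwd :
        Quot G.Adj → Quot s) := by
    intro q
    obtain ⟨x, rfl⟩ := Quot.mk_surjective q
    obtain ⟨v, rfl⟩ := Quot.mk_surjective x
    exact ⟨Quot.mk _ v, rfl⟩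
  calc (G.deleteEdges {e}).numComponents
      ≤ Nat.card (Quot s ⊕ Unit) := Nat.card_le_card_of_injective f hfinj
    _ = Nat.card (Quot s) + 1 := by rw [Nat.card_sum]; simp
    _ ≤ G.numComponents + 1 := by
        have := Nat.card_le_card_of_surjective _ hχ
        have h4 : G.numComponents = Nat.card (Quot G.Adj) := rfl
        omega

lemma card_V_le : ∀ (n : ℕ) (G : Multigraph), Nat.card G.E = n →
    Nat.card G.V ≤ Nat.card G.E + G.numComponents := by
  intro n
  induction n with
  | zero =>
    intro G h
    haveI : IsEmpty G.E := by
      rw [Nat.card_eq_fintype_card] at h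
      exact Fintype.card_eq_zero_iff.mp h
    have hq : Nat.card G.V = G.numComponents := by
      refine Nat.card_congr
        ⟨Quot.mk _, Quot.lift id (by rintro a b ⟨e, _⟩; exact isEmptyElim e),
          fun v => rfl, fun q => ?_⟩
      induction q using Quot.ind with | _ v => rfl
    omega
  | succ n ih =>
    intro G h
    have hne : Nonempty G.E := by
      rw [Nat.card_eq_fintype_card] at h
      exact Fintype.card_pos_iff.mp (by omega)
    obtain ⟨e⟩ := hne
    have hcard : Nat.card (G.deleteEdges {e}).E = n := by
      have h1 : Nat.card (G.deleteEdges ({e} : Set G.E)).E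
          = Nat.card {f : G.E // ¬ f = e} :=
        Nat.card_congr (Equiv.subtypeEquivRight (by simp))
      rw [h1, Nat.card_eq_fintype_card, Fintype.card_subtype_compl,
        Fintype.card_subtype_eq]
      rw [Nat.card_eq_fintype_card] at h
      omega
    have h1 := ih (G.deleteEdges {e}) hcard
    have h2 := nc_del_single G e
    have h3 : Nat.card (G.deleteEdges {e}).V = Nat.card G.V := rfl
    omega

lemma nc_del_le_card (G : Multigraph) (B : Set G.E) :
    (G.deleteEdges B).numComponents ≤ G.numComponents + B.ncard := by
  classical
  refine Set.Finite.induction_on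
    (motive := fun s _ => (G.deleteEdges s).numComponents ≤ G.numComponents + s.ncard)
    B (Set.toFinite B) ?_ ?_
  · show (G.deleteEdges (∅ : Set G.E)).numComponents ≤ G.numComponents + (∅ : Set G.E).ncard
    have : (G.deleteEdges (∅ : Set G.E)).numComponents = G.numComponents :=
      quot_card_congr adj_del_empty
    rw [this, Set.ncard_empty]
    omega
  · intro a Bs ha hfin ih
    have hset : (Bs ∪ {e : G.E | ∃ h : e ∉ Bs,
        (⟨e, h⟩ : (G.deleteEdges Bs).E) ∈ {x : (G.deleteEdges Bs).E | x.1 = a}})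
        = insert a Bs := by
      ext x
      constructor
      · intro hx
        rcases (Set.mem_union _ _ _).mp hx with hx | ⟨h1, h2⟩
        · exact Set.mem_insert_iff.mpr (Or.inr hx)
        · exact Set.mem_insert_iff.mpr (Or.inl h2)
      · intro hx
        rcases Set.mem_insert_iff.mp hx with rfl | hx
        · by_cases hxB : x ∈ Bs
          · exact Set.mem_union_left _ hxB
          · exact Set.mem_union_right _ ⟨hxB, rfl⟩
        · exact Set.mem_union_left _ hx
    have hAdj : (G.deleteEdges (insert a Bs)).Adj
        = ((G.deleteEdges Bs).deleteEdges {x | x.1 = a}).Adj := by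
      rw [adj_del_del, hset]
    have hone : ({x : (G.deleteEdges Bs).E | x.1 = a} : Set (G.deleteEdges Bs).E)
        = {(⟨a, ha⟩ : (G.deleteEdges Bs).E)} := by
      ext x
      exact ⟨fun h => Subtype.ext h, fun h => congrArg Subtype.val h⟩
    have h2 := nc_del_single (G.deleteEdges Bs) ⟨a, ha⟩
    have h3 : (G.deleteEdges (insert a Bs)).numComponents
        = ((G.deleteEdges Bs).deleteEdges {x | x.1 = a}).numComponents :=
      quot_card_congr hAdj
    rw [Set.ncard_insert_of_notMem ha hfin]
    rw [h3, hone]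
    omega

lemma preconnected_del_insert (G : Multigraph) (F : Set G.E) (e : G.E)
    (hpre : (G.deleteEdges F).Preconnected)
    (he : (G.deleteEdges (insert e F)).Reachable (G.fst e) (G.snd e)) :
    (G.deleteEdges (insert e F)).Preconnected := by
  intro v w
  have h := hpre v w
  induction h with
  | refl => exact .refl
  | tail _ hadj ih =>
    obtain ⟨⟨g, hg⟩, hgvw⟩ := hadj
    by_cases hge : g = e
    · subst hge
      rcases hgvw with ⟨h1, h2⟩ | ⟨h1, h2⟩
      · exact ih.trans (by rw [← h1, ← h2]; exact he)
      · exact ih.trans (by rw [← h1, ← h2]; exact reach_symm he)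
    · exact ih.tail ⟨⟨g, fun hmem => (Set.mem_insert_iff.mp hmem).elim hge hg⟩, hgvw⟩

lemma preconnected_del_empty (h : G.Preconnected) :
    (G.deleteEdges (∅ : Set G.E)).Preconnected := by
  intro v w
  exact Relation.ReflTransGen.mono
    (fun a b ⟨g, hh⟩ => ⟨⟨g, Set.notMem_empty g⟩, hh⟩) v w (h v w)

end Multigraph

open Multigraph

/-- A graph is 3-edge connected iff it is connected and the map
`e ↦ {e}` is a bijection from `E(Γ)` onto the set of C1-sets of `Γ`. -/
theorem edgeConnected3_iff_isC1_singletons (G : Multigraph) :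
    G.EdgeConnected3 ↔
      (G.Connected ∧ (∀ e : G.E, G.IsC1 {e}) ∧
        ∀ S : Set G.E, G.IsC1 S → ∃ e : G.E, S = {e}) := by
  classical
  constructor
  · intro hEC
    obtain ⟨hNE, hEC2⟩ := hEC
    have hpre2 : ∀ F : Set G.E, F.ncard ≤ 2 → (G.deleteEdges F).Preconnected := by
      intro F hF
      exact hEC2 F (by rw [Nat.card_coe_set_eq]; exact hF)
    have hGpre : G.Preconnected := by
      intro v w
      exact Relation.ReflTransGen.mono (fun a b h => adj_del_empty (G := G) ▸ h) v w
        (hpre2 ∅ (by simp) v w)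
    have hsep : G.sepEdges = ∅ := by
      ext e
      simp only [Multigraph.sepEdges, Set.mem_setOf_eq, Set.mem_empty_iff_false, iff_false]
      intro h
      exact h (hpre2 {e} (by simp) (G.fst e) (G.snd e))
    refine ⟨⟨hNE, hGpre⟩, ?_, ?_⟩
    · -- every singleton is a C1-set
      intro e
      refine ⟨fun f _ h => h (hpre2 {f} (by simp) (G.fst f) (G.snd f)), ?_, ?_⟩
      · rw [hsep]
        -- contraction of the complement of {e} is a one-vertex one-loop graph
        have hset : (∅ ∪ {x : G.E | ∃ h : x ∉ (∅ : Set G.E),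
            (⟨x, h⟩ : (G.deleteEdges (∅ : Set G.E)).E) ∈
              {e' : (G.deleteEdges (∅ : Set G.E)).E | e'.1 ∈ ({e} : Set G.E)}})
            = ({e} : Set G.E) := by
          ext x
          constructor
          · intro hx
            rcases (Set.mem_union _ _ _).mp hx with hx | ⟨h1, h2⟩
            · exact absurd hx (Set.notMem_empty x)
            · exact h2
          · intro hx
            exact Set.mem_union_right _ ⟨Set.notMem_empty x, hx⟩
        have hAdj : ((G.deleteEdges (∅ : Set G.E)).deleteEdges
            {e' : (G.deleteEdges (∅ : Set G.E)).E | e'.1 ∈ ({e} : Set G.E)}).Adj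
            = (G.deleteEdges {e}).Adj := by
          rw [adj_del_del, hset]
        have hsubK : Subsingleton (((G.deleteEdges (∅ : Set G.E)).contractCompl
            {e' | e'.1 ∈ ({e} : Set G.E)}).V) := by
          show Subsingleton (Quot ((G.deleteEdges (∅ : Set G.E)).deleteEdges
            {e' : (G.deleteEdges (∅ : Set G.E)).E | e'.1 ∈ ({e} : Set G.E)}).Adj)
          rw [hAdj]
          refine ⟨fun a b => ?_⟩
          induction a using Quot.ind with | _ v => ?_
          induction b using Quot.ind with | _ w => ?_
          exact quot_mk_eq_of_reachable (hpre2 {e} (by simp) v w)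
        have hsubE : Subsingleton (((G.deleteEdges (∅ : Set G.E)).contractCompl
            {e' | e'.1 ∈ ({e} : Set G.E)}).E) := by
          refine ⟨fun a b => Subtype.ext (Subtype.ext ?_)⟩
          exact (show a.1.1 = e from a.2).trans (show b.1.1 = e from b.2).symm
        set K := (G.deleteEdges (∅ : Set G.E)).contractCompl
            {e' | e'.1 ∈ ({e} : Set G.E)} with hK
        have ε₀ : K.E := ⟨⟨e, Set.notMem_empty e⟩, rfl⟩
        haveI := hsubK
        haveI := hsubE
        haveI hsubV' : Subsingleton K.core.V := ⟨fun a b => Subtype.ext (Subsingleton.elim _ _)⟩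
        haveI hsubE' : Subsingleton K.core.E := ⟨fun a b => Subtype.ext (Subsingleton.elim _ _)⟩
        have hneV : Nonempty K.core.V := ⟨⟨K.fst ε₀, ε₀, Set.mem_univ _, Or.inl rfl⟩⟩
        have hneE : Nonempty K.core.E := ⟨⟨ε₀, Set.mem_univ _⟩⟩
        have hpreC : K.core.Preconnected := fun v w =>
          (Subsingleton.elim v w) ▸ Relation.ReflTransGen.refl
        refine ⟨⟨hneV, hpreC⟩, ?_, ?_⟩
        · ext η
          simp only [Multigraph.sepEdges, Set.mem_setOf_eq, Set.mem_empty_iff_false, iff_false]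
          intro hη
          exact hη ((Subsingleton.elim (K.core.fst η) (K.core.snd η)) ▸
            Relation.ReflTransGen.refl)
        · have h1 : K.core.numComponents = 1 := numComponents_eq_one ⟨hneV, hpreC⟩
          have h2 : Nat.card K.core.E = 1 := card_eq_one_of hsubE' hneE
          have h3 : Nat.card K.core.V = 1 := card_eq_one_of hsubV' hneV
          unfold Multigraph.b1
          rw [h1, h2, h3]
          norm_num
      · rw [hsep]
        ext η
        simp only [Multigraph.sepEdges, Set.mem_setOf_eq, Set.mem_empty_iff_false, iff_false]
        intro hη
        have hfe : η.1.1 ≠ e := fun h => η.2 h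
        -- transfer reachability through two deletions
        have hA1 : ((((G.deleteEdges (∅ : Set G.E)).deleteEdges
            {e' | e'.1 ∈ ({e} : Set G.E)})).deleteEdges {η}).Adj
            = (G.deleteEdges ({e, η.1.1} : Set G.E)).Adj := by
          rw [adj_del_del, adj_del_del]
          congr 2
          ext x
          constructor
          · intro hx
            rcases (Set.mem_union _ _ _).mp hx with hx | ⟨h1, h2⟩
            · exact absurd hx (Set.notMem_empty x)
            · rcases (Set.mem_union _ _ _).mp h2 with h3 | ⟨h4, h5⟩
              · exact Set.mem_insert_iff.mpr (Or.inl h3)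
              · refine Set.mem_insert_iff.mpr (Or.inr ?_)
                have : (⟨⟨x, h1⟩, h4⟩ : (((G.deleteEdges (∅ : Set G.E)).deleteEdges
                    {e' | e'.1 ∈ ({e} : Set G.E)})).E) = η := h5
                rw [← this]
                exact rfl
          · intro hx
            rcases Set.mem_insert_iff.mp hx with rfl | hx
            · exact Set.mem_union_right _ ⟨Set.notMem_empty x,
                Set.mem_union_left _ rfl⟩
            · rw [Set.mem_singleton_iff] at hx
              subst hx
              exact Set.mem_union_right _ ⟨Set.notMem_empty _,
                Set.mem_union_right _ ⟨η.2, Subtype.ext (Subtype.ext rfl)⟩⟩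
        have hreach := hpre2 {e, η.1.1}
          (le_trans (Set.ncard_insert_le _ _) (by simp)) (G.fst η.1.1) (G.snd η.1.1)
        exact hη ((rtg_congr hA1).mpr hreach)
    · -- every C1-set is a singleton
      intro S hS
      obtain ⟨-, hcyc, -⟩ := hS
      rw [hsep] at hcyc
      obtain ⟨hconnC, -, hb1C⟩ := hcyc
      obtain ⟨⟨v0, ε, -, -⟩⟩ := hconnC.1
      have he₀ : ε.1.1 ∈ S := ε.2
      by_contra hno
      push_neg at hno
      have hex : ∃ f ∈ S, f ≠ ε.1.1 := by
        by_contra hc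
        push_neg at hc
        exact hno ε.1.1 (Set.eq_singleton_iff_unique_mem.mpr ⟨he₀, hc⟩)
      obtain ⟨f, hfS, hfne⟩ := hex
      have hnc1 := numComponents_eq_one hconnC
      have hb1C' := hb1C
      simp only [Multigraph.b1, hnc1] at hb1C'
      have hEVn : Nat.card ((G.deleteEdges (∅ : Set G.E)).contractCompl
          {e' | e'.1 ∈ S}).core.E = Nat.card ((G.deleteEdges (∅ : Set G.E)).contractCompl
          {e' | e'.1 ∈ S}).core.V := by omega
      have hcE : Nat.card ((G.deleteEdges (∅ : Set G.E)).contractCompl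
          {e' | e'.1 ∈ S}).core.E = S.ncard := by
        calc Nat.card ((G.deleteEdges (∅ : Set G.E)).contractCompl
              {e' | e'.1 ∈ S}).core.E
            = Nat.card ((G.deleteEdges (∅ : Set G.E)).contractCompl
              {e' | e'.1 ∈ S}).E := Nat.card_congr (Equiv.Set.univ _)
          _ = Nat.card ↥S := Nat.card_congr
              ⟨fun x => ⟨x.1.1, x.2⟩, fun s => ⟨⟨s.1, Set.notMem_empty s.1⟩, s.2⟩,
                fun x => Subtype.ext (Subtype.ext rfl), fun s => rfl⟩
          _ = S.ncard := Nat.card_coe_set_eq S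
      have hVle : Nat.card ((G.deleteEdges (∅ : Set G.E)).contractCompl
          {e' | e'.1 ∈ S}).core.V ≤ Nat.card ((G.deleteEdges (∅ : Set G.E)).contractCompl
          {e' | e'.1 ∈ S}).V :=
        Nat.card_le_card_of_injective Subtype.val Subtype.val_injective
      have hKV : Nat.card ((G.deleteEdges (∅ : Set G.E)).contractCompl
          {e' | e'.1 ∈ S}).V = (G.deleteEdges S).numComponents := by
        have hset : (∅ ∪ {x : G.E | ∃ h : x ∉ (∅ : Set G.E),
            (⟨x, h⟩ : (G.deleteEdges (∅ : Set G.E)).E) ∈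
              {e' : (G.deleteEdges (∅ : Set G.E)).E | e'.1 ∈ S}}) = S := by
          ext x
          constructor
          · intro hx
            rcases (Set.mem_union _ _ _).mp hx with hx | ⟨h1, h2⟩
            · exact absurd hx (Set.notMem_empty x)
            · exact h2
          · intro hx
            exact Set.mem_union_right _ ⟨Set.notMem_empty x, hx⟩
        have hAdj : ((G.deleteEdges (∅ : Set G.E)).deleteEdges
            {e' : (G.deleteEdges (∅ : Set G.E)).E | e'.1 ∈ S}).Adj
            = (G.deleteEdges S).Adj := by
          rw [adj_del_del, hset]
        exact quot_card_congr hAdj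
      have hP1 : (G.deleteEdges ({ε.1.1, f} : Set G.E)).numComponents = 1 :=
        numComponents_eq_one ⟨hNE, hpre2 {ε.1.1, f}
          (le_trans (Set.ncard_insert_le _ _) (by simp))⟩
      have hB := nc_del_le_card (G.deleteEdges ({ε.1.1, f} : Set G.E))
        {x | x.1 ∈ S}
      have hAdj2 : ((G.deleteEdges ({ε.1.1, f} : Set G.E)).deleteEdges
          {x | x.1 ∈ S}).Adj = (G.deleteEdges S).Adj := by
        have hset : (({ε.1.1, f} : Set G.E) ∪ {x : G.E |
            ∃ h : x ∉ ({ε.1.1, f} : Set G.E),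
              (⟨x, h⟩ : (G.deleteEdges ({ε.1.1, f} : Set G.E)).E) ∈
                {y : (G.deleteEdges ({ε.1.1, f} : Set G.E)).E | y.1 ∈ S}}) = S := by
          ext x
          constructor
          · intro hx
            rcases (Set.mem_union _ _ _).mp hx with hx | ⟨h1, h2⟩
            · rcases Set.mem_insert_iff.mp hx with rfl | hx
              · exact he₀
              · rw [Set.mem_singleton_iff] at hx; subst hx; exact hfS
            · exact h2
          · intro hx
            by_cases hp : x ∈ ({ε.1.1, f} : Set G.E)
            · exact Set.mem_union_left _ hp
            · exact Set.mem_union_right _ ⟨hp, hx⟩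
        rw [adj_del_del, hset]
      have hEq2 : ((G.deleteEdges ({ε.1.1, f} : Set G.E)).deleteEdges
          {x | x.1 ∈ S}).numComponents = (G.deleteEdges S).numComponents :=
        quot_card_congr hAdj2
      have hsub : ({ε.1.1, f} : Set G.E) ⊆ S :=
        Set.insert_subset he₀ (Set.singleton_subset_iff.mpr hfS)
      have hncB : ({x : (G.deleteEdges ({ε.1.1, f} : Set G.E)).E | x.1 ∈ S}).ncard
          = S.ncard - 2 := by
        rw [← Nat.card_coe_set_eq]
        rw [Nat.card_congr
          (⟨fun x => ⟨x.1.1, x.2, x.1.2⟩, fun s => ⟨⟨s.1, s.2.2⟩, s.2.1⟩,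
            fun x => Subtype.ext (Subtype.ext rfl), fun s => Subtype.ext rfl⟩ :
            ↥{x : (G.deleteEdges ({ε.1.1, f} : Set G.E)).E | x.1 ∈ S}
              ≃ ↥(S \ {ε.1.1, f}))]
        rw [Nat.card_coe_set_eq, Set.ncard_diff hsub, Set.ncard_pair hfne.symm]
      have h2S : 2 ≤ S.ncard := by
        have := Set.ncard_le_ncard hsub S.toFinite
        rwa [Set.ncard_pair hfne.symm] at this
      omega
  · rintro ⟨hconn, h1, -⟩
    have hsep : G.sepEdges = ∅ :=
      Set.eq_empty_iff_forall_notMem.mpr fun e he => ((h1 e).1 e rfl) he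
    refine ⟨hconn.1, ?_⟩
    intro F hF
    have hseteq : ∀ e : G.E, insert e (∅ : Set G.E) = ({e} : Set G.E) := fun e => by simp
    have hsingle : ∀ e : G.E, (G.deleteEdges ({e} : Set G.E)).Preconnected := by
      intro e
      have hre : (G.deleteEdges ({e} : Set G.E)).Reachable (G.fst e) (G.snd e) :=
        not_not.mp ((h1 e).1 e rfl)
      have h2 := preconnected_del_insert G ∅ e (preconnected_del_empty hconn.2)
        (by rw [hseteq]; exact hre)
      rwa [hseteq] at h2
    have hpair : ∀ e f : G.E, f ≠ e → (G.deleteEdges ({e, f} : Set G.E)).Preconnected := by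
      intro e f hfe
      have h3 := (h1 e).2.2
      rw [hsep] at h3
      have hη : (⟨⟨f, Set.notMem_empty f⟩, fun hm => hfe hm⟩ :
          ((G.deleteEdges (∅ : Set G.E)).deleteEdges
            {e' | e'.1 ∈ ({e} : Set G.E)}).E) ∉
          ((G.deleteEdges (∅ : Set G.E)).deleteEdges
            {e' | e'.1 ∈ ({e} : Set G.E)}).sepEdges := by
        rw [h3]; exact Set.notMem_empty _
      have hre : (((G.deleteEdges (∅ : Set G.E)).deleteEdges
          {e' | e'.1 ∈ ({e} : Set G.E)}).deleteEdges
            {(⟨⟨f, Set.notMem_empty f⟩, fun hm => hfe hm⟩ :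
              ((G.deleteEdges (∅ : Set G.E)).deleteEdges
                {e' | e'.1 ∈ ({e} : Set G.E)}).E)}).Reachable (G.fst f) (G.snd f) :=
        not_not.mp hη
      have hA1 : (((G.deleteEdges (∅ : Set G.E)).deleteEdges
          {e' | e'.1 ∈ ({e} : Set G.E)}).deleteEdges
            {(⟨⟨f, Set.notMem_empty f⟩, fun hm => hfe hm⟩ :
              ((G.deleteEdges (∅ : Set G.E)).deleteEdges
                {e' | e'.1 ∈ ({e} : Set G.E)}).E)}).Adj
          = (G.deleteEdges (insert f ({e} : Set G.E))).Adj := by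
        rw [adj_del_del, adj_del_del]
        congr 2
        ext x
        constructor
        · intro hx
          rcases (Set.mem_union _ _ _).mp hx with hx | ⟨h1', h2⟩
          · exact absurd hx (Set.notMem_empty x)
          · rcases (Set.mem_union _ _ _).mp h2 with h3 | ⟨h4, h5⟩
            · exact Set.mem_insert_iff.mpr (Or.inr h3)
            · have hxf : x = f := congrArg (fun z => z.1.1) h5
              exact Set.mem_insert_iff.mpr (Or.inl hxf)
        · intro hx
          rcases Set.mem_insert_iff.mp hx with rfl | hx
          · exact Set.mem_union_right _ ⟨Set.notMem_empty _,
              Set.mem_union_right _ ⟨fun hm => hfe hm, rfl⟩⟩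
          · exact Set.mem_union_right _ ⟨Set.notMem_empty _,
              Set.mem_union_left _ hx⟩
      have h4 := preconnected_del_insert G {e} f (hsingle e)
        ((rtg_congr hA1).mp hre)
      rwa [show insert f ({e} : Set G.E) = ({e, f} : Set G.E) from Set.pair_comm f e] at h4
    have hF2 : F.ncard ≤ 2 := by rw [← Nat.card_coe_set_eq]; exact hF
    obtain h0 | h1' | h2' : F.ncard = 0 ∨ F.ncard = 1 ∨ F.ncard = 2 := by omega
    · rw [Set.ncard_eq_zero] at h0
      rw [h0]
      exact preconnected_del_empty hconn.2
    · rw [Set.ncard_eq_one] at h1'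
      obtain ⟨a, rfl⟩ := h1'
      exact hsingle a
    · rw [Set.ncard_eq_two] at h2'
      obtain ⟨a, b, hab, rfl⟩ := h2'
      exact hpair a b (Ne.symm hab)
end
end
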